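/- arXiv:0901.0824 — 5 statements merged into one kernel-verified Lean document; each statement's English description precedes it below -/
import Mathlib

section
/- Suppose the gain matrix V is irreducible and φ satisfies (A.2) and (A.3). Then a point q lies on the boundary ∂F of the feasible QoS region F if and only if there exists a vector w ∈ ℝ^K with all entries strictly positive such that q maximizes the linear functional x ↦ wᵀx over F, i.e., wᵀx ≤ wᵀq for all x ∈ F. -/
open Matrix

/-- A nonnegative square matrix is irreducible. -/
def MatIrred {m : Type*} [Fintype m] (M : Matrix m m ℝ) : Prop :=
  ∀ S : Set m, S.Nonempty → S ≠ Set.univ → ∃ i ∈ S, ∃ j ∉ S, 0 < M i j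

/-- Spectral radius of a real square matrix (largest modulus of a complex eigenvalue). -/
noncomputable def specRad {m : Type*} [Fintype m] [DecidableEq m] (M : Matrix m m ℝ) : ℝ :=
  sSup ((fun w : ℂ => ‖w‖) '' spectrum ℂ (M.map fun x => (x : ℂ)))

/-- SIR of link `k` under power vector `p`. -/
noncomputable def SIR {K : ℕ} (V : Matrix (Fin K) (Fin K) ℝ) (z : Fin K → ℝ)
    (p : Fin K → ℝ) (k : Fin K) : ℝ :=
  p k / (V.mulVec p k + z k)

/-- The polytope of admissible power vectors. -/
def Pset {K N : ℕ} (C : Matrix (Fin N) (Fin K) ℝ) (phat : Fin N → ℝ) :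
    Set (Fin K → ℝ) :=
  {p | (∀ k, 0 ≤ p k) ∧ ∀ n, C.mulVec p n ≤ phat n}

/-- Admissible power vectors with all entries positive. -/
def Pplus {K N : ℕ} (C : Matrix (Fin N) (Fin K) ℝ) (phat : Fin N → ℝ) :
    Set (Fin K → ℝ) :=
  {p ∈ Pset C phat | ∀ k, 0 < p k}

/-- Normalized power-constraint functions `gₙ(p) = cₙᵀ p / Pₙ`. -/
noncomputable def gcon {K N : ℕ} (C : Matrix (Fin N) (Fin K) ℝ) (phat : Fin N → ℝ)
    (n : Fin N) (p : Fin K → ℝ) : ℝ :=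
  C.mulVec p n / phat n

/-- The matrices `B⁽ⁿ⁾ = Γ (V + (1/Pₙ) z cₙᵀ)`. -/
noncomputable def Bmat {K N : ℕ} (V : Matrix (Fin K) (Fin K) ℝ) (z : Fin K → ℝ)
    (γ : Fin K → ℝ) (C : Matrix (Fin N) (Fin K) ℝ) (phat : Fin N → ℝ) (n : Fin N) :
    Matrix (Fin K) (Fin K) ℝ :=
  Matrix.diagonal γ * (V + (phat n)⁻¹ • Matrix.vecMulVec z (C n))

/-- The extended `(K+1)×(K+1)` matrices `A⁽ⁿ⁾`. -/
noncomputable def Amat {K N : ℕ} (V : Matrix (Fin K) (Fin K) ℝ) (z : Fin K → ℝ)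
    (γ : Fin K → ℝ) (C : Matrix (Fin N) (Fin K) ℝ) (phat : Fin N → ℝ) (n : Fin N) :
    Matrix (Fin (K+1)) (Fin (K+1)) ℝ :=
  Matrix.of fun i j =>
    if hi : (i : ℕ) < K then
      if hj : (j : ℕ) < K then γ ⟨i, hi⟩ * V ⟨i, hi⟩ ⟨j, hj⟩
      else γ ⟨i, hi⟩ * z ⟨i, hi⟩
    else
      if hj : (j : ℕ) < K then (phat n)⁻¹ * ∑ k, C n k * (γ k * V k ⟨j, hj⟩)
      else (phat n)⁻¹ * ∑ k, C n k * (γ k * z k)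

/-- `pbar` is a max-min SIR-balanced power vector: it maximizes
`p ↦ min_k SIR_k(p)/γ_k` over the set `P`. -/
def MaxMinBalanced {K N : ℕ} (V : Matrix (Fin K) (Fin K) ℝ) (z : Fin K → ℝ)
    (γ : Fin K → ℝ) (C : Matrix (Fin N) (Fin K) ℝ) (phat : Fin N → ℝ)
    (pbar : Fin K → ℝ) : Prop :=
  pbar ∈ Pset C phat ∧
    ∀ p ∈ Pset C phat, (⨅ k, SIR V z p k / γ k) ≤ ⨅ k, SIR V z pbar k / γ k

/-- The set `N₀(p)` of active power constraints. -/
def activeSet {K N : ℕ} (C : Matrix (Fin N) (Fin K) ℝ) (phat : Fin N → ℝ)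
    (p : Fin K → ℝ) : Set (Fin N) :=
  {n | gcon C phat n p = 1 ∧ ∀ m, gcon C phat m p ≤ gcon C phat n p}

/-- The (relatively open) probability simplex `Π⁺_K`. -/
def PosSimplex (K : ℕ) : Set (Fin K → ℝ) :=
  {w | (∀ k, 0 < w k) ∧ ∑ k, w k = 1}

/-- The feasible QoS region `F`. -/
def QoSRegion {K N : ℕ} (V : Matrix (Fin K) (Fin K) ℝ) (z : Fin K → ℝ)
    (γ : Fin K → ℝ) (C : Matrix (Fin N) (Fin K) ℝ) (phat : Fin N → ℝ)
    (φ : ℝ → ℝ) : Set (Fin K → ℝ) :=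
  {q | ∃ p ∈ Pplus C phat, ∀ k, q k = φ (SIR V z p k / γ k)}


/-!
The region `F` is closed, convex and has nonempty interior, so every boundary point `q` admits a
nonzero supporting functional `w`; conversely, a maximizer of a functional `w > 0` is never an
interior point.

Feasibility of `q` is equivalent to the existence of `p ∈ P` with `Γ g(q) (Vp + z) ≤ p`: the
monotone map `p ↦ Γ g(q) (Vp + z)` then has a fixed point between `0` and `p` (Knaster–Tarski),
and that fixed point realises `q`. This makes `F` downward closed, and convex: the geometric mean
`p₁ᵃ p₂ᵇ` of two such vectors works for `a q₁ + b q₂` by Hölder's inequality and log-convexity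
of `g`. Closedness comes from compactness of `P`, log-convexity again keeping the SIRs of a limit
power vector away from `0`.

Downward closedness forces `w ≥ 0`. If `w k₀ = 0`, halving the target of link `k₀` gives a new
fixed point strictly below the old one in every coordinate, because `V` is irreducible; scaling
it up slightly yields a strict subsolution, i.e. a feasible point improving every link other
than `k₀`, which contradicts maximality since some `w j > 0`.
-/

open Set Filter Topology

theorem Monotone.exists_fixedPt_mem_Icc {α : Type*} [ConditionallyCompleteLattice α]
    {f : α → α} (hf : Monotone f) {a b : α} (hab : a ≤ b) (ha : a ≤ f a) (hb : f b ≤ b) :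
    ∃ x ∈ Icc a b, f x = x := by
  have : Fact (a ≤ b) := ⟨hab⟩
  let F : Icc a b →o Icc a b :=
    ⟨fun x => ⟨f x, ha.trans (hf x.2.1), (hf x.2.2).trans hb⟩, fun _ _ h => hf h⟩
  exact ⟨F.lfp, F.lfp.2, congrArg Subtype.val F.map_lfp⟩

theorem Set.LeftInvOn.mapsTo_image {α β : Type*} {f : α → β} {f' : β → α} {s : Set α}
    (h : LeftInvOn f' f s) : MapsTo f' (f '' s) s := by
  rintro _ ⟨x, hx, rfl⟩
  rwa [h hx]

theorem Set.LeftInvOn.strictMonoOn_image {α β : Type*} [LinearOrder α] [Preorder β]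
    {f : α → β} {f' : β → α} {s : Set α} (h : LeftInvOn f' f s) (hf : StrictMonoOn f s) :
    StrictMonoOn f' (f '' s) := by
  rintro _ ⟨x, hx, rfl⟩ _ ⟨y, hy, rfl⟩ hxy
  rw [h hx, h hy]
  exact (hf.lt_iff_lt hx hy).1 hxy

theorem Real.sum_mul_rpow_mul_rpow_le {ι : Type*} (s : Finset ι) {a b : ℝ} (ha : 0 < a)
    (hb : 0 < b) (hab : a + b = 1) {u x y : ι → ℝ} (hu : ∀ i ∈ s, 0 ≤ u i)
    (hx : ∀ i ∈ s, 0 ≤ x i) (hy : ∀ i ∈ s, 0 ≤ y i) :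
    ∑ i ∈ s, u i * (x i ^ a * y i ^ b) ≤ (∑ i ∈ s, u i * x i) ^ a * (∑ i ∈ s, u i * y i) ^ b := by
  have hsplit : ∀ i ∈ s, u i * (x i ^ a * y i ^ b) = (u i * x i) ^ a * (u i * y i) ^ b := by
    intro i hi
    rw [Real.mul_rpow (hu i hi) (hx i hi), Real.mul_rpow (hu i hi) (hy i hi)]
    nth_rw 1 [← Real.rpow_one (u i), Real.rpow_of_add_eq (hu i hi) one_ne_zero hab]
    ring
  rw [Finset.sum_congr rfl hsplit]
  have := Real.inner_le_Lp_mul_Lq_of_nonneg s (Real.HolderConjugate.inv_inv ha hb hab)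
    (fun i hi => Real.rpow_nonneg (mul_nonneg (hu i hi) (hx i hi)) a)
    (fun i hi => Real.rpow_nonneg (mul_nonneg (hu i hi) (hy i hi)) b)
  rwa [one_div, one_div, inv_inv, inv_inv,
    Finset.sum_congr rfl fun i hi => Real.rpow_rpow_inv (mul_nonneg (hu i hi) (hx i hi)) ha.ne',
    Finset.sum_congr rfl fun i hi => Real.rpow_rpow_inv (mul_nonneg (hu i hi) (hy i hi)) hb.ne']
    at this

theorem ConvexOn.le_rpow_mul_rpow_of_log {s : Set ℝ} {f : ℝ → ℝ}
    (hf : ConvexOn ℝ s fun x => Real.log (f x)) (hpos : ∀ x ∈ s, 0 < f x) {x y a b : ℝ}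
    (hx : x ∈ s) (hy : y ∈ s) (ha : 0 ≤ a) (hb : 0 ≤ b) (hab : a + b = 1) :
    f (a * x + b * y) ≤ f x ^ a * f y ^ b := by
  have hmem : a * x + b * y ∈ s := hf.1 hx hy ha hb hab
  rw [← Real.log_le_log_iff (hpos _ hmem) (by have := hpos x hx; have := hpos y hy; positivity),
    Real.log_mul (Real.rpow_pos_of_pos (hpos x hx) a).ne' (Real.rpow_pos_of_pos (hpos y hy) b).ne',
    Real.log_rpow (hpos x hx), Real.log_rpow (hpos y hy)]
  exact hf.2 hx hy ha hb hab

theorem ConvexOn.bddBelow_image_inter_Ici {s : Set ℝ} {f : ℝ → ℝ} (hf : ConvexOn ℝ s f)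
    (hmono : MonotoneOn f s) {a b : ℝ} (ha : a ∈ s) (hb : b ∈ s) (hab : a < b) (c : ℝ) :
    BddBelow (f '' (s ∩ Ici c)) := by
  set S := (f b - f a) / (b - a)
  refine ⟨f a - |S| * |a - c|, ?_⟩
  rintro _ ⟨x, ⟨hx, hcx⟩, rfl⟩
  have hbound : 0 ≤ |S| * |a - c| := by positivity
  rcases le_or_gt a x with hax | hxa
  · linarith [hmono ha hx hax]
  · have hslope : (f a - f x) / (a - x) ≤ S := hf.slope_mono_adjacent hx hb hxa hab
    rw [div_le_iff₀ (sub_pos.2 hxa)] at hslope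
    have : S * (a - x) ≤ |S| * |a - c| :=
      mul_le_mul (le_abs_self S) (by rw [abs_of_nonneg] <;> linarith [mem_Ici.1 hcx])
        (by linarith) (abs_nonneg S)
    linarith

theorem exists_pos_le_of_convexOn_log {φ g : ℝ → ℝ} (hφ : StrictMonoOn φ (Ioi 0))
    (hginv : LeftInvOn g φ (Ioi 0)) (hglog : ConvexOn ℝ (φ '' Ioi 0) fun q => Real.log (g q))
    (c : ℝ) : ∃ ε > 0, ∀ y ∈ φ '' Ioi 0, c ≤ y → ε ≤ g y := by
  have hmono : MonotoneOn (fun q => Real.log (g q)) (φ '' Ioi 0) := fun x hx y hy hxy =>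
    Real.log_le_log (hginv.mapsTo_image hx) ((hginv.strictMonoOn_image hφ).monotoneOn hx hy hxy)
  have h1 : (1 : ℝ) ∈ Ioi 0 := mem_Ioi.2 one_pos
  have h2 : (2 : ℝ) ∈ Ioi 0 := mem_Ioi.2 two_pos
  obtain ⟨m, hm⟩ := hglog.bddBelow_image_inter_Ici hmono (mem_image_of_mem φ h1)
    (mem_image_of_mem φ h2) (hφ h1 h2 one_lt_two) c
  refine ⟨Real.exp m, Real.exp_pos m, fun y hy hcy => ?_⟩
  rw [← Real.le_log_iff_exp_le (hginv.mapsTo_image hy)]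
  exact hm ⟨y, ⟨hy, hcy⟩, rfl⟩

theorem exists_sum_mul_le_of_notMem_interior {ι : Type*} [Fintype ι] {A : Set (ι → ℝ)}
    {x : ι → ℝ} (hA : Convex ℝ A) (hxA : x ∉ interior A) (hAint : (interior A).Nonempty) :
    ∃ w : ι → ℝ, w ≠ 0 ∧ ∀ a ∈ A, ∑ i, w i * a i ≤ ∑ i, w i * x i := by
  classical
  obtain ⟨f, hf, hmax⟩ := geometric_hahn_banach_of_nonempty_interior_point hA hxA hAint
  set w : ι → ℝ := fun i => f fun j => if i = j then 1 else 0
  have hfw : ∀ a, f a = ∑ i, w i * a i := fun a => by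
    rw [show f a = f.toLinearMap a from rfl, LinearMap.pi_apply_eq_sum_univ]
    simp [w, mul_comm]
  refine ⟨w, fun hw => hf (ContinuousLinearMap.ext fun a => ?_), fun a ha => ?_⟩
  · simp [hfw, hw]
  · simpa only [hfw] using hmax a ha

theorem notMem_interior_of_sum_mul_le {ι : Type*} [Fintype ι] {A : Set (ι → ℝ)}
    {x w : ι → ℝ} (hw : w ≠ 0) (hmax : ∀ a ∈ A, ∑ i, w i * a i ≤ ∑ i, w i * x i) :
    x ∉ interior A := by
  intro hx
  have hline : Tendsto (fun t : ℝ => x + t • w) (𝓝[>] 0) (𝓝 x) := by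
    have : Continuous fun t : ℝ => x + t • w := by fun_prop
    simpa using (this.tendsto 0).mono_left nhdsWithin_le_nhds
  obtain ⟨t, htA, ht⟩ :=
    ((hline.eventually (mem_interior_iff_mem_nhds.1 hx)).and self_mem_nhdsWithin).exists
  have hw2 : 0 < ∑ i, w i * w i := by
    obtain ⟨j, hj⟩ := Function.ne_iff.1 hw
    exact Finset.sum_pos' (fun i _ => mul_self_nonneg _) ⟨j, Finset.mem_univ _, by simpa using hj⟩
  have := hmax _ htA
  simp only [Pi.add_apply, Pi.smul_apply, smul_eq_mul, mul_add, Finset.sum_add_distrib] at this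
  have hsum : ∑ i, w i * (t * w i) = t * ∑ i, w i * w i := by
    rw [Finset.mul_sum]; exact Finset.sum_congr rfl fun i _ => by ring
  nlinarith

namespace Matrix

variable {m n : Type*} [Fintype n] {A : Matrix m n ℝ}

theorem mulVec_mono_of_nonneg (hA : ∀ i j, 0 ≤ A i j) : Monotone (A *ᵥ ·) :=
  fun _ _ h i => Finset.sum_le_sum fun j _ => mul_le_mul_of_nonneg_left (h j) (hA i j)

theorem mulVec_nonneg_of_nonneg (hA : ∀ i j, 0 ≤ A i j) {x : n → ℝ} (hx : 0 ≤ x) :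
    0 ≤ A *ᵥ x := by
  simpa using mulVec_mono_of_nonneg hA hx

theorem mulVec_add_pos_of_nonneg (hA : ∀ i j, 0 ≤ A i j) {x : n → ℝ} (hx : 0 ≤ x)
    {z : m → ℝ} (hz : ∀ i, 0 < z i) (i : m) : 0 < (A *ᵥ x) i + z i :=
  add_pos_of_nonneg_of_pos (mulVec_nonneg_of_nonneg hA hx i) (hz i)

theorem mulVec_rpow_mul_rpow_add_le (hA : ∀ i j, 0 ≤ A i j) {a b : ℝ} (ha : 0 < a)
    (hb : 0 < b) (hab : a + b = 1) {x y : n → ℝ} (hx : 0 ≤ x) (hy : 0 ≤ y) {c : ℝ}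
    (hc : 0 ≤ c) (i : m) :
    (A *ᵥ fun j => x j ^ a * y j ^ b) i + c ≤ ((A *ᵥ x) i + c) ^ a * ((A *ᵥ y) i + c) ^ b := by
  -- `c` is the term of an extra index `none`, at which `x = y = 1`
  have := Real.sum_mul_rpow_mul_rpow_le Finset.univ ha hb hab
    (u := fun o : Option n => o.elim c (A i)) (x := fun o => o.elim 1 x)
    (y := fun o => o.elim 1 y) (by rintro (_ | j) - <;> simp [hc, hA])
    (by rintro (_ | j) -; exacts [zero_le_one, hx j])
    (by rintro (_ | j) -; exacts [zero_le_one, hy j])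
  simpa [Fintype.sum_option, mulVec, dotProduct, add_comm] using this

end Matrix

theorem exists_fixedPt_mulVec_add_le {ι : Type*} [Fintype ι] {V : Matrix ι ι ℝ}
    (hV : ∀ i j, 0 ≤ V i j) {z β p₀ : ι → ℝ} (hz : 0 ≤ z) (hβ : 0 ≤ β) (hp₀ : 0 ≤ p₀)
    (hsub : ∀ k, β k * ((V *ᵥ p₀) k + z k) ≤ p₀ k) :
    ∃ p, 0 ≤ p ∧ p ≤ p₀ ∧ ∀ k, β k * ((V *ᵥ p) k + z k) = p k := by
  have hmono : Monotone fun (p : ι → ℝ) k => β k * ((V *ᵥ p) k + z k) := fun p p' h k =>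
    mul_le_mul_of_nonneg_left (by gcongr; exact Matrix.mulVec_mono_of_nonneg hV h k) (hβ k)
  have h0 : (0 : ι → ℝ) ≤ fun k => β k * ((V *ᵥ 0) k + z k) := fun k => by
    simpa using mul_nonneg (hβ k) (hz k)
  obtain ⟨p, ⟨hp0, hpp₀⟩, hfix⟩ := hmono.exists_fixedPt_mem_Icc hp₀ h0 hsub
  exact ⟨p, hp0, hpp₀, congrFun hfix⟩

theorem MatIrred.eq_univ {m : Type*} [Fintype m] {M : Matrix m m ℝ} (hM : MatIrred M)
    {S : Set m} (hS : S.Nonempty) (hclosed : ∀ i j, 0 < M i j → j ∈ S → i ∈ S) :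
    S = univ := by
  by_contra hne
  obtain ⟨i, hi, j, hj, hij⟩ := hM Sᶜ (nonempty_compl.2 hne) (by simpa using hS.ne_empty)
  exact hi (hclosed i j hij (not_not.1 hj))

theorem MatIrred.lt_of_fixedPt {ι : Type*} [Fintype ι] {V : Matrix ι ι ℝ} (hirr : MatIrred V)
    (hV : ∀ i j, 0 ≤ V i j) {z β β' p p' : ι → ℝ} (hβ' : ∀ i, 0 < β' i) (hβ'β : β' ≤ β)
    {k₀ : ι} (hk₀ : β' k₀ < β k₀) (hD : ∀ i, 0 < (V *ᵥ p) i + z i)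
    (hp : ∀ i, β i * ((V *ᵥ p) i + z i) ≤ p i) (hp' : ∀ i, β' i * ((V *ᵥ p') i + z i) = p' i)
    (hle : p' ≤ p) (i : ι) : p' i < p i := by
  have hstep : ∀ i, β' i * ((V *ᵥ p) i + z i) ≤ p i := fun i =>
    (mul_le_mul_of_nonneg_right (hβ'β i) (hD i).le).trans (hp i)
  have hS : {i | p' i < p i} = univ := by
    refine hirr.eq_univ ⟨k₀, ?_⟩ fun i j hij hj => ?_
    · calc p' k₀ = β' k₀ * ((V *ᵥ p') k₀ + z k₀) := (hp' k₀).symm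
        _ ≤ β' k₀ * ((V *ᵥ p) k₀ + z k₀) := by
          gcongr
          exacts [(hβ' k₀).le, Matrix.mulVec_mono_of_nonneg hV hle k₀]
        _ < β k₀ * ((V *ᵥ p) k₀ + z k₀) := mul_lt_mul_of_pos_right hk₀ (hD k₀)
        _ ≤ p k₀ := hp k₀
    · have hVlt : (V *ᵥ p') i < (V *ᵥ p) i :=
        Finset.sum_lt_sum (fun l _ => mul_le_mul_of_nonneg_left (hle l) (hV i l))
          ⟨j, Finset.mem_univ j, mul_lt_mul_of_pos_left hj hij⟩
      calc p' i = β' i * ((V *ᵥ p') i + z i) := (hp' i).symm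
        _ < β' i * ((V *ᵥ p) i + z i) := by gcongr; exact hβ' i
        _ ≤ p i := hstep i
  exact (hS ▸ mem_univ i : i ∈ {i | p' i < p i})

namespace Pset

variable {K N : ℕ} {C : Matrix (Fin N) (Fin K) ℝ} {phat : Fin N → ℝ}

theorem mem_of_le (hC : ∀ n k, 0 ≤ C n k) {p p' : Fin K → ℝ} (hp' : p' ∈ Pset C phat)
    (hp : 0 ≤ p) (hle : p ≤ p') : p ∈ Pset C phat :=
  ⟨hp, fun n => (Matrix.mulVec_mono_of_nonneg hC hle n).trans (hp'.2 n)⟩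

theorem isCompact (hC : ∀ n k, 0 ≤ C n k) (hCcol : ∀ k, ∃ n, C n k = 1) :
    IsCompact (Pset C phat) := by
  choose col hcol using hCcol
  refine (isCompact_Icc (a := 0) (b := fun k => phat (col k))).of_isClosed_subset ?_
    fun p hp => ⟨hp.1, fun k => ?_⟩
  · have hcont : ∀ n, Continuous fun p : Fin K → ℝ => (C *ᵥ p) n := fun n =>
      (continuous_apply n).comp (Continuous.matrix_mulVec continuous_const continuous_id)
    simp only [Pset, ofPred_and, ofPred_forall]
    exact (isClosed_iInter fun k => isClosed_le continuous_const (continuous_apply k)).inter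
      (isClosed_iInter fun n => isClosed_le (hcont n) continuous_const)
  · calc p k = C (col k) k * p k := by rw [hcol, one_mul]
      _ ≤ (C *ᵥ p) (col k) :=
        Finset.single_le_sum (f := fun j => C (col k) j * p j)
          (fun j _ => mul_nonneg (hC _ j) (hp.1 j)) (Finset.mem_univ k)
      _ ≤ phat (col k) := hp.2 _

end Pset

theorem Pplus.exists_const_mem {K N : ℕ} {C : Matrix (Fin N) (Fin K) ℝ} {phat : Fin N → ℝ}
    (hC : ∀ n k, C n k ≤ 1) (hphat : ∀ n, 0 < phat n) : ∃ ε > 0, (fun _ => ε) ∈ Pplus C phat := by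
  have hlim : Tendsto (fun ε : ℝ => K * ε) (𝓝[>] 0) (𝓝 0) := by
    simpa using ((tendsto_id (x := 𝓝 (0 : ℝ))).const_mul (K : ℝ)).mono_left nhdsWithin_le_nhds
  obtain ⟨ε, hεK, hε⟩ := ((eventually_all.2 fun n => hlim.eventually (gt_mem_nhds (hphat n))).and
    self_mem_nhdsWithin).exists
  refine ⟨ε, hε, ⟨fun _ => hε.le, fun n => ?_⟩, fun _ => hε⟩
  calc (C *ᵥ fun _ => ε) n = ∑ j, C n j * ε := rfl
    _ ≤ ∑ _j : Fin K, ε := Finset.sum_le_sum fun j _ => mul_le_of_le_one_left hε.le (hC n j)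
    _ ≤ phat n := by simpa using (hεK n).le

section SIR

variable {K : ℕ} {V : Matrix (Fin K) (Fin K) ℝ} {z γ : Fin K → ℝ}

theorem SIR_div_pos (hV : ∀ i j, 0 ≤ V i j) (hz : ∀ k, 0 < z k) (hγ : ∀ k, 0 < γ k)
    {p : Fin K → ℝ} (hp : ∀ k, 0 < p k) (k : Fin K) : 0 < SIR V z p k / γ k :=
  div_pos (div_pos (hp k) (Matrix.mulVec_add_pos_of_nonneg hV (fun j => (hp j).le) hz k)) (hγ k)

theorem SIR_div_eq_iff (hV : ∀ i j, 0 ≤ V i j) (hz : ∀ k, 0 < z k) (hγ : ∀ k, 0 < γ k)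
    {p : Fin K → ℝ} (hp : 0 ≤ p) (k : Fin K) (s : ℝ) :
    SIR V z p k / γ k = s ↔ γ k * s * ((V *ᵥ p) k + z k) = p k := by
  have := (Matrix.mulVec_add_pos_of_nonneg hV hp hz k).ne'
  have := (hγ k).ne'
  unfold SIR
  constructor <;> intro h <;> rw [← h] <;> field_simp

end SIR

namespace QoSRegion

variable {K N : ℕ} {V : Matrix (Fin K) (Fin K) ℝ} {z γ : Fin K → ℝ}
  {C : Matrix (Fin N) (Fin K) ℝ} {phat : Fin N → ℝ} {φ g : ℝ → ℝ}

theorem apply_mem_image (hV : ∀ i j, 0 ≤ V i j) (hz : ∀ k, 0 < z k) (hγ : ∀ k, 0 < γ k)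
    {q : Fin K → ℝ} (hq : q ∈ QoSRegion V z γ C phat φ) (k : Fin K) : q k ∈ φ '' Ioi 0 := by
  obtain ⟨p, ⟨-, hppos⟩, hqp⟩ := hq
  exact ⟨_, SIR_div_pos hV hz hγ hppos k, (hqp k).symm⟩

theorem exists_fixedPt_of_mem (hV : ∀ i j, 0 ≤ V i j) (hz : ∀ k, 0 < z k)
    (hγ : ∀ k, 0 < γ k) (hginv : LeftInvOn g φ (Ioi 0)) {q : Fin K → ℝ}
    (hq : q ∈ QoSRegion V z γ C phat φ) :
    ∃ p ∈ Pset C phat, ∀ k, γ k * g (q k) * ((V *ᵥ p) k + z k) = p k := by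
  obtain ⟨p, ⟨hpP, hppos⟩, hqp⟩ := hq
  refine ⟨p, hpP, fun k => ?_⟩
  rw [← SIR_div_eq_iff hV hz hγ hpP.1, hqp k, hginv (SIR_div_pos hV hz hγ hppos k)]

theorem mem_iff (hV : ∀ i j, 0 ≤ V i j) (hz : ∀ k, 0 < z k) (hγ : ∀ k, 0 < γ k)
    (hC : ∀ n k, 0 ≤ C n k) (hginv : LeftInvOn g φ (Ioi 0)) (q : Fin K → ℝ) :
    q ∈ QoSRegion V z γ C phat φ ↔ (∀ k, q k ∈ φ '' Ioi 0) ∧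
      ∃ p ∈ Pset C phat, ∀ k, γ k * g (q k) * ((V *ᵥ p) k + z k) ≤ p k := by
  refine ⟨fun hq => ?_, fun ⟨hQ, p₀, hp₀, hsub⟩ => ?_⟩
  · obtain ⟨p, hpP, hfix⟩ := exists_fixedPt_of_mem hV hz hγ hginv hq
    exact ⟨apply_mem_image hV hz hγ hq, p, hpP, fun k => (hfix k).le⟩
  have hβ : ∀ k, 0 < γ k * g (q k) := fun k => mul_pos (hγ k) (hginv.mapsTo_image (hQ k))
  obtain ⟨p, hp0, hpp₀, hfix⟩ := exists_fixedPt_mulVec_add_le hV (fun k => (hz k).le)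
    (fun k => (hβ k).le) hp₀.1 hsub
  have hppos : ∀ k, 0 < p k := fun k =>
    hfix k ▸ mul_pos (hβ k) (Matrix.mulVec_add_pos_of_nonneg hV hp0 hz k)
  refine ⟨p, ⟨Pset.mem_of_le hC hp₀ hp0 hpp₀, hppos⟩, fun k => ?_⟩
  rw [(SIR_div_eq_iff hV hz hγ hp0 k (g (q k))).2 (hfix k), hginv.rightInvOn_image (hQ k)]

theorem mem_of_le (hV : ∀ i j, 0 ≤ V i j) (hz : ∀ k, 0 < z k) (hγ : ∀ k, 0 < γ k)
    (hC : ∀ n k, 0 ≤ C n k) (hφ : StrictMonoOn φ (Ioi 0)) (hginv : LeftInvOn g φ (Ioi 0))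
    {q y : Fin K → ℝ} (hq : q ∈ QoSRegion V z γ C phat φ) (hyQ : ∀ k, y k ∈ φ '' Ioi 0)
    (hyq : y ≤ q) : y ∈ QoSRegion V z γ C phat φ := by
  rw [mem_iff hV hz hγ hC hginv] at hq ⊢
  obtain ⟨hqQ, p, hpP, hsub⟩ := hq
  refine ⟨hyQ, p, hpP, fun k => le_trans ?_ (hsub k)⟩
  have hg := (hginv.strictMonoOn_image hφ).monotoneOn (hyQ k) (hqQ k) (hyq k)
  exact mul_le_mul_of_nonneg_right (mul_le_mul_of_nonneg_left hg (hγ k).le)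
    (Matrix.mulVec_add_pos_of_nonneg hV hpP.1 hz k).le

theorem convex (hV : ∀ i j, 0 ≤ V i j) (hz : ∀ k, 0 < z k) (hγ : ∀ k, 0 < γ k)
    (hC : ∀ n k, 0 ≤ C n k) (hphat : ∀ n, 0 < phat n) (hginv : LeftInvOn g φ (Ioi 0))
    (hglog : ConvexOn ℝ (φ '' Ioi 0) fun q => Real.log (g q)) :
    Convex ℝ (QoSRegion V z γ C phat φ) := by
  refine convex_iff_forall_pos.2 fun q₁ h₁ q₂ h₂ a b ha hb hab => ?_
  have hsplit : ∀ {x : ℝ}, 0 ≤ x → x = x ^ a * x ^ b := fun hx => by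
    rw [← Real.rpow_of_add_eq hx one_ne_zero hab, Real.rpow_one]
  rw [mem_iff hV hz hγ hC hginv] at h₁ h₂ ⊢
  obtain ⟨hQ₁, p₁, hp₁, hs₁⟩ := h₁
  obtain ⟨hQ₂, p₂, hp₂, hs₂⟩ := h₂
  have hpc : 0 ≤ fun j => p₁ j ^ a * p₂ j ^ b := fun j =>
    mul_nonneg (Real.rpow_nonneg (hp₁.1 j) a) (Real.rpow_nonneg (hp₂.1 j) b)
  refine ⟨fun k => hglog.1 (hQ₁ k) (hQ₂ k) ha.le hb.le hab, _, ⟨hpc, fun n => ?_⟩, fun k => ?_⟩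
  · have hCn := Matrix.mulVec_rpow_mul_rpow_add_le hC ha hb hab hp₁.1 hp₂.1 le_rfl n
    simp only [add_zero] at hCn
    have h₁ := Matrix.mulVec_nonneg_of_nonneg hC hp₁.1 n
    have h₂ := Matrix.mulVec_nonneg_of_nonneg hC hp₂.1 n
    calc _ ≤ (C *ᵥ p₁) n ^ a * (C *ᵥ p₂) n ^ b := hCn
      _ ≤ phat n ^ a * phat n ^ b :=
        mul_le_mul (Real.rpow_le_rpow h₁ (hp₁.2 n) ha.le) (Real.rpow_le_rpow h₂ (hp₂.2 n) hb.le)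
          (Real.rpow_nonneg h₂ b) (Real.rpow_nonneg (hphat n).le a)
      _ = phat n := (hsplit (hphat n).le).symm
  · set D₁ := (V *ᵥ p₁) k + z k
    set D₂ := (V *ᵥ p₂) k + z k
    have hD₁ := (Matrix.mulVec_add_pos_of_nonneg hV hp₁.1 hz k).le
    have hD₂ := (Matrix.mulVec_add_pos_of_nonneg hV hp₂.1 hz k).le
    have hg₁ : 0 ≤ g (q₁ k) := le_of_lt (hginv.mapsTo_image (hQ₁ k))
    have hg₂ : 0 ≤ g (q₂ k) := le_of_lt (hginv.mapsTo_image (hQ₂ k))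
    have hγk := (hγ k).le
    have hgc : g (a * q₁ k + b * q₂ k) ≤ g (q₁ k) ^ a * g (q₂ k) ^ b :=
      hglog.le_rpow_mul_rpow_of_log (fun _ hy => hginv.mapsTo_image hy) (hQ₁ k) (hQ₂ k)
        ha.le hb.le hab
    have hDc : (V *ᵥ fun j => p₁ j ^ a * p₂ j ^ b) k + z k ≤ D₁ ^ a * D₂ ^ b :=
      Matrix.mulVec_rpow_mul_rpow_add_le hV ha hb hab hp₁.1 hp₂.1 (hz k).le k
    calc γ k * g (a * q₁ k + b * q₂ k) * ((V *ᵥ fun j => p₁ j ^ a * p₂ j ^ b) k + z k)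
        ≤ γ k * (g (q₁ k) ^ a * g (q₂ k) ^ b) * (D₁ ^ a * D₂ ^ b) := by
          have := Matrix.mulVec_add_pos_of_nonneg hV hpc hz k
          gcongr
      _ = (γ k * g (q₁ k) * D₁) ^ a * (γ k * g (q₂ k) * D₂) ^ b := by
          rw [Real.mul_rpow (by positivity) hD₁, Real.mul_rpow hγk hg₁,
            Real.mul_rpow (by positivity) hD₂, Real.mul_rpow hγk hg₂]
          conv_lhs => rw [hsplit hγk]
          ring
      _ ≤ p₁ k ^ a * p₂ k ^ b := by
          have := Real.rpow_nonneg (hp₁.1 k) a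
          gcongr
          exacts [hs₁ k, hs₂ k]

theorem isClosed (hV : ∀ i j, 0 ≤ V i j) (hz : ∀ k, 0 < z k) (hγ : ∀ k, 0 < γ k)
    (hC : ∀ n k, 0 ≤ C n k) (hCcol : ∀ k, ∃ n, C n k = 1) (hφc : ContinuousOn φ (Ioi 0))
    (hφ : StrictMonoOn φ (Ioi 0)) (hginv : LeftInvOn g φ (Ioi 0))
    (hglog : ConvexOn ℝ (φ '' Ioi 0) fun q => Real.log (g q)) :
    IsClosed (QoSRegion V z γ C phat φ) := by
  refine isClosed_of_closure_subset fun q hq => ?_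
  obtain ⟨qs, hqsF, hqs⟩ := mem_closure_iff_seq_limit.1 hq
  choose ps hps hqps using hqsF
  obtain ⟨p, hpP, ψ, hψ, hpψ⟩ := (Pset.isCompact hC hCcol).tendsto_subseq fun n => (hps n).1
  have hD := Matrix.mulVec_add_pos_of_nonneg hV hpP.1 hz
  have hSIR : ∀ k, Tendsto (fun n => SIR V z (ps (ψ n)) k / γ k) atTop
      (𝓝 (SIR V z p k / γ k)) := fun k => by
    have hcont : Continuous fun p : Fin K → ℝ => (V *ᵥ p) k + z k :=
      ((continuous_apply k).comp (Continuous.matrix_mulVec continuous_const continuous_id)).add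
        continuous_const
    exact ((((continuous_apply k).tendsto p).div (hcont.tendsto p) (hD k).ne').div_const
      (γ k)).comp hpψ
  have hqψ : ∀ k, Tendsto (fun n => qs (ψ n) k) atTop (𝓝 (q k)) := fun k =>
    ((continuous_apply k).tendsto q).comp (hqs.comp hψ.tendsto_atTop)
  have hpos : ∀ k, 0 < SIR V z p k / γ k := fun k => by
    obtain ⟨ε, hε, hεg⟩ := exists_pos_le_of_convexOn_log hφ hginv hglog (q k - 1)
    refine hε.trans_le (ge_of_tendsto (hSIR k) ?_)
    filter_upwards [(hqψ k).eventually (Ici_mem_nhds (sub_one_lt (q k)))] with n hn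
    have hs := SIR_div_pos hV hz hγ (hps (ψ n)).2 k
    rw [← hginv hs, ← hqps]
    exact hεg _ (hqps (ψ n) k ▸ mem_image_of_mem φ hs) hn
  have hppos : ∀ k, 0 < p k := fun k =>
    (div_pos_iff_of_pos_right (hD k)).1 ((div_pos_iff_of_pos_right (hγ k)).1 (hpos k))
  refine ⟨p, ⟨hpP, hppos⟩, fun k => tendsto_nhds_unique (hqψ k) ?_⟩
  simp_rw [hqps]
  exact ((hφc.continuousAt (Ioi_mem_nhds (hpos k))).tendsto).comp (hSIR k)

theorem interior_nonempty (hV : ∀ i j, 0 ≤ V i j) (hz : ∀ k, 0 < z k) (hγ : ∀ k, 0 < γ k)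
    (hC : ∀ n k, 0 ≤ C n k) (hC₁ : ∀ n k, C n k ≤ 1) (hphat : ∀ n, 0 < phat n)
    (hφ : StrictMonoOn φ (Ioi 0)) (hginv : LeftInvOn g φ (Ioi 0)) (hQ : Convex ℝ (φ '' Ioi 0)) :
    (interior (QoSRegion V z γ C phat φ)).Nonempty := by
  obtain ⟨ε, -, hp₀⟩ := Pplus.exists_const_mem hC₁ hphat
  set s := fun k => SIR V z (fun _ => ε) k / γ k
  have hs : ∀ k, 0 < s k := SIR_div_pos hV hz hγ hp₀.2
  have hs₂ : ∀ k, 0 < s k / 2 := fun k => half_pos (hs k)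
  have hlt : ∀ k, φ (s k / 2) < φ (s k) := fun k => hφ (hs₂ k) (hs k) (half_lt_self (hs k))
  set O := univ.pi fun k => Ioo (φ (s k / 2)) (φ (s k))
  have hOF : O ⊆ QoSRegion V z γ C phat φ := fun y hy => by
    have hy' : ∀ k, y k ∈ Ioo (φ (s k / 2)) (φ (s k)) := fun k => hy k (mem_univ k)
    refine mem_of_le hV hz hγ hC hφ hginv ⟨_, hp₀, fun k => rfl⟩ (fun k => ?_)
      fun k => (hy' k).2.le
    exact hQ.ordConnected.out (mem_image_of_mem φ (hs₂ k)) (mem_image_of_mem φ (hs k))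
      (Ioo_subset_Icc_self (hy' k))
  obtain ⟨y, hy⟩ : O.Nonempty := univ_pi_nonempty_iff.2 fun k => nonempty_Ioo.2 (hlt k)
  exact ⟨y, interior_maximal hOF (isOpen_set_pi finite_univ fun _ _ => isOpen_Ioo) hy⟩

theorem exists_lt_of_mem (hirr : MatIrred V) (hV : ∀ i j, 0 ≤ V i j) (hz : ∀ k, 0 < z k)
    (hγ : ∀ k, 0 < γ k) (hC : ∀ n k, 0 ≤ C n k) (hφ : StrictMonoOn φ (Ioi 0))
    (hginv : LeftInvOn g φ (Ioi 0)) {q : Fin K → ℝ} (hq : q ∈ QoSRegion V z γ C phat φ)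
    (k₀ : Fin K) : ∃ q' ∈ QoSRegion V z γ C phat φ, ∀ k ≠ k₀, q k < q' k := by
  have hQ := apply_mem_image hV hz hγ hq
  obtain ⟨p, hpP, hfix⟩ := exists_fixedPt_of_mem hV hz hγ hginv hq
  set β : Fin K → ℝ := fun k => γ k * g (q k)
  have hβ : ∀ k, 0 < β k := fun k => mul_pos (hγ k) (hginv.mapsTo_image (hQ k))
  set β' := Function.update β k₀ (β k₀ / 2)
  have hβ'β : β' ≤ β := fun k => by
    rcases eq_or_ne k k₀ with rfl | hk
    · simpa [β'] using (half_lt_self (hβ k)).le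
    · simp [β', hk]
  have hβ' : ∀ k, 0 < β' k := fun k => by
    rcases eq_or_ne k k₀ with rfl | hk
    · simpa [β'] using hβ k
    · simpa [β', hk] using hβ k
  have hD := Matrix.mulVec_add_pos_of_nonneg hV hpP.1 hz
  obtain ⟨p', hp'0, hp'p, hp'⟩ := exists_fixedPt_mulVec_add_le hV (fun k => (hz k).le)
    (fun k => (hβ' k).le) hpP.1
    fun k => (mul_le_mul_of_nonneg_right (hβ'β k) (hD k).le).trans (hfix k).le
  have hlt := hirr.lt_of_fixedPt hV hβ' hβ'β (k₀ := k₀)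
    (by simpa [β'] using half_lt_self (hβ k₀)) hD (fun k => (hfix k).le) hp' hp'p
  have hp'pos : ∀ k, 0 < p' k := fun k =>
    hp' k ▸ mul_pos (hβ' k) (Matrix.mulVec_add_pos_of_nonneg hV hp'0 hz k)
  obtain ⟨c, hcp, hc⟩ : ∃ c : ℝ, (∀ k, c * p' k ≤ p k) ∧ 1 < c := by
    have hlim : ∀ k, Tendsto (fun c : ℝ => c * p' k) (𝓝[>] 1) (𝓝 (p' k)) := fun k => by
      simpa using ((tendsto_id (x := 𝓝 (1 : ℝ))).mul_const (p' k)).mono_left nhdsWithin_le_nhds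
    exact ((eventually_all.2 fun k => (hlim k).eventually (ge_mem_nhds (hlt k))).and
      self_mem_nhdsWithin).exists
  set x := c • p'
  have hxpos : ∀ k, 0 < x k := fun k => mul_pos (zero_lt_one.trans hc) (hp'pos k)
  have hxP : x ∈ Pset C phat := Pset.mem_of_le hC hpP (fun k => (hxpos k).le) hcp
  -- `c > 1` and `z > 0` turn the fixed point `p'` into a strict subsolution `c • p'`
  have hstrict : ∀ k, β' k * ((V *ᵥ x) k + z k) < x k := fun k => by
    have hVx : (V *ᵥ x) k = c * (V *ᵥ p') k := by simp [x, Matrix.mulVec_smul]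
    have := mul_pos (mul_pos (sub_pos.2 hc) (hβ' k)) (hz k)
    simp only [x, Pi.smul_apply, smul_eq_mul, hVx]
    nlinarith [hp' k]
  refine ⟨fun k => φ (SIR V z x k / γ k), ⟨x, ⟨hxP, hxpos⟩, fun k => rfl⟩, fun k hk => ?_⟩
  have hgx : g (q k) < SIR V z x k / γ k := by
    have hDx := Matrix.mulVec_add_pos_of_nonneg hV hxP.1 hz k
    have := hstrict k
    simp only [β', β, Function.update_of_ne hk] at this
    rw [SIR, div_div, lt_div_iff₀ (mul_pos hDx (hγ k))]
    linarith
  calc q k = φ (g (q k)) := (hginv.rightInvOn_image (hQ k)).symm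
    _ < φ (SIR V z x k / γ k) :=
      hφ (hginv.mapsTo_image (hQ k)) (SIR_div_pos hV hz hγ hxpos k) hgx

theorem pos_of_sum_mul_le (hirr : MatIrred V) (hV : ∀ i j, 0 ≤ V i j) (hz : ∀ k, 0 < z k)
    (hγ : ∀ k, 0 < γ k) (hC : ∀ n k, 0 ≤ C n k) (hφ : StrictMonoOn φ (Ioi 0))
    (hginv : LeftInvOn g φ (Ioi 0)) {q w : Fin K → ℝ} (hq : q ∈ QoSRegion V z γ C phat φ)
    (hw : w ≠ 0) (hmax : ∀ x ∈ QoSRegion V z γ C phat φ, ∑ k, w k * x k ≤ ∑ k, w k * q k)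
    (k : Fin K) : 0 < w k := by
  have hQ := apply_mem_image hV hz hγ hq
  have hdiff : ∀ x ∈ QoSRegion V z γ C phat φ, ∑ k, w k * (x k - q k) ≤ 0 := fun x hx => by
    simp only [mul_sub, Finset.sum_sub_distrib]
    linarith [hmax x hx]
  have hw0 : ∀ k, 0 ≤ w k := fun k => by
    by_contra! hk
    have hg : 0 < g (q k) := hginv.mapsTo_image (hQ k)
    set y := φ (g (q k) / 2)
    have hyq : y < q k := by
      calc y < φ (g (q k)) := hφ (half_pos hg) hg (half_lt_self hg)
        _ = q k := hginv.rightInvOn_image (hQ k)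
    have hmem : Function.update q k y ∈ QoSRegion V z γ C phat φ := by
      refine mem_of_le hV hz hγ hC hφ hginv hq (fun j => ?_) (update_le_self_iff.2 hyq.le)
      rcases eq_or_ne j k with rfl | hj
      · rw [Function.update_self]
        exact mem_image_of_mem φ (half_pos hg)
      · simpa [hj] using hQ j
    have := hdiff _ hmem
    rw [Finset.sum_eq_single k (fun j _ hj => by simp [hj]) (by simp)] at this
    simp only [Function.update_self] at this
    nlinarith
  refine (hw0 k).lt_of_ne fun h0 => ?_
  obtain ⟨q', hq'F, hq'⟩ := exists_lt_of_mem hirr hV hz hγ hC hφ hginv hq k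
  obtain ⟨j, hj⟩ := Function.ne_iff.1 hw
  have hjk : j ≠ k := fun h => hj (h ▸ h0.symm)
  refine (hdiff q' hq'F).not_gt (Finset.sum_pos' (fun l _ => ?_)
    ⟨j, Finset.mem_univ j, mul_pos ((hw0 j).lt_of_ne' hj) (sub_pos.2 (hq' j hjk))⟩)
  rcases eq_or_ne l k with rfl | hl
  · simp [← h0]
  · exact mul_nonneg (hw0 l) (sub_pos.2 (hq' l hl)).le

end QoSRegion

theorem stmt0_general    {K N : ℕ} (hK : 2 ≤ K)
    (V : Matrix (Fin K) (Fin K) ℝ) (z γ : Fin K → ℝ)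
    (C : Matrix (Fin N) (Fin K) ℝ) (phat : Fin N → ℝ)
    (hV : ∀ i j, 0 ≤ V i j)
    (hz : ∀ k, 0 < z k) (hγ : ∀ k, 0 < γ k)
    (hC : ∀ n k, C n k = 0 ∨ C n k = 1) (hCcol : ∀ k, ∃ n, C n k = 1)
    (hphat : ∀ n, 0 < phat n)
    (hirr : MatIrred V)
    (φ g : ℝ → ℝ)
    (hφdiff : ContDiffOn ℝ 1 φ (Set.Ioi 0)) (hφmono : StrictMonoOn φ (Set.Ioi 0))
    (hginv : ∀ x ∈ Set.Ioi (0:ℝ), g (φ x) = x)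
    (hglog : ConvexOn ℝ (φ '' Set.Ioi 0) fun q => Real.log (g q))
    (q : Fin K → ℝ) :
    q ∈ frontier (QoSRegion V z γ C phat φ) ↔
      ∃ w : Fin K → ℝ, (∀ k, 0 < w k) ∧ q ∈ QoSRegion V z γ C phat φ ∧
        ∀ x ∈ QoSRegion V z γ C phat φ, ∑ k, w k * x k ≤ ∑ k, w k * q k := by
  have hC₀ : ∀ n k, 0 ≤ C n k := fun n k => by rcases hC n k with h | h <;> simp [h]
  have hC₁ : ∀ n k, C n k ≤ 1 := fun n k => by rcases hC n k with h | h <;> simp [h]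
  have hclosed := QoSRegion.isClosed (phat := phat) hV hz hγ hC₀ hCcol hφdiff.continuousOn
    hφmono hginv hglog
  constructor
  · intro hfr
    have hqF := hclosed.frontier_subset hfr
    obtain ⟨w, hw, hmax⟩ := exists_sum_mul_le_of_notMem_interior
      (QoSRegion.convex hV hz hγ hC₀ hphat hginv hglog) hfr.2
      (QoSRegion.interior_nonempty hV hz hγ hC₀ hC₁ hphat hφmono hginv hglog.1)
    exact ⟨w, QoSRegion.pos_of_sum_mul_le hirr hV hz hγ hC₀ hφmono hginv hqF hw hmax, hqF, hmax⟩
  · rintro ⟨w, hw, hqF, hmax⟩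
    have : w ≠ 0 := Function.ne_iff.2 ⟨⟨0, by omega⟩, (hw _).ne'⟩
    exact ⟨subset_closure hqF, notMem_interior_of_sum_mul_le this hmax⟩

theorem stmt0    {K N : ℕ} (hK : 2 ≤ K) (hN : 1 ≤ N)
    (V : Matrix (Fin K) (Fin K) ℝ) (z γ : Fin K → ℝ)
    (C : Matrix (Fin N) (Fin K) ℝ) (phat : Fin N → ℝ)
    (hV : ∀ i j, 0 ≤ V i j) (hVdiag : ∀ i, V i i = 0)
    (hz : ∀ k, 0 < z k) (hγ : ∀ k, 0 < γ k)
    (hC : ∀ n k, C n k = 0 ∨ C n k = 1) (hCcol : ∀ k, ∃ n, C n k = 1)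
    (hphat : ∀ n, 0 < phat n)
    (hirr : MatIrred V)
    (φ g : ℝ → ℝ)
    (hφdiff : ContDiffOn ℝ 1 φ (Set.Ioi 0)) (hφmono : StrictMonoOn φ (Set.Ioi 0))
    (hginv : ∀ x ∈ Set.Ioi (0:ℝ), g (φ x) = x) (hφg : ∀ q ∈ φ '' Set.Ioi 0, φ (g q) = q)
    (hglog : ConvexOn ℝ (φ '' Set.Ioi 0) fun q => Real.log (g q))
    (q : Fin K → ℝ) :
    q ∈ frontier (QoSRegion V z γ C phat φ) ↔
      ∃ w : Fin K → ℝ, (∀ k, 0 < w k) ∧ q ∈ QoSRegion V z γ C phat φ ∧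
        ∀ x ∈ QoSRegion V z γ C phat φ, ∑ k, w k * x k ≤ ∑ k, w k * q k :=
  stmt0_general hK V z γ C phat hV hz hγ hC hCcol hphat hirr φ g hφdiff hφmono hginv hglog q
end

section
/- If the gain matrix V is irreducible, then the max-min SIR-balanced power vector is unique: there is exactly one p̄ ∈ P such that min_{1≤k≤K} SIR_k(p̄)/γ_k ≥ min_{1≤k≤K} SIR_k(p)/γ_k for all p ∈ P. -/
open Matrix

/-! At a max-min optimum `q` (which exists since `P` is compact) every weighted SIR equals the
optimal level `t > 0`. Otherwise let `T` be the links at level `t`: scaling down the powers outside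
`T` by a factor close to `1` keeps all links at level `≥ t` and, by irreducibility of `V`, lifts
some link of `T` strictly above `t`; repeating this empties `T`, contradicting optimality. So every
optimum is a nonnegative fixed point of `p ↦ t Γ (V p + z)`, and such a fixed point is unique
because `z > 0`. -/

namespace Matrix

variable {m n : Type*} [Fintype n] {A : Matrix m n ℝ} {p q : n → ℝ}

lemma mulVec_apply_le_of_le (hA : ∀ i j, 0 ≤ A i j) (hpq : p ≤ q) (i : m) :
    (A *ᵥ p) i ≤ (A *ᵥ q) i :=
  dotProduct_le_dotProduct_of_nonneg_left hpq fun j => hA i j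

lemma mulVec_apply_lt_of_le (hA : ∀ i j, 0 ≤ A i j) (hpq : p ≤ q) {i : m} {j : n}
    (hAij : 0 < A i j) (hj : p j < q j) : (A *ᵥ p) i < (A *ᵥ q) i :=
  Finset.sum_lt_sum (fun k _ => mul_le_mul_of_nonneg_left (hpq k) (hA i k))
    ⟨j, Finset.mem_univ j, mul_lt_mul_of_pos_left hj hAij⟩

lemma mulVec_add_pos (hA : ∀ i j, 0 ≤ A i j) {z : m → ℝ} (hz : ∀ i, 0 < z i) (hp : 0 ≤ p)
    (i : m) : 0 < (A *ᵥ p) i + z i := by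
  have := mulVec_apply_le_of_le hA hp i
  rw [mulVec_zero, Pi.zero_apply] at this
  linarith [hz i]

end Matrix

section FixedPoint

variable {ι : Type*} [Fintype ι] {V : Matrix ι ι ℝ} {a z q r : ι → ℝ}

/-- At the index `k₀` maximizing `(q - r) / q`, the positive offset `z` makes the fixed-point
equation strict. -/
lemma le_of_eq_mul_mulVec_add (hV : ∀ i j, 0 ≤ V i j) (ha : ∀ k, 0 < a k) (hz : ∀ k, 0 < z k)
    (hq0 : 0 ≤ q) (hq : q = a * (V *ᵥ q + z)) (hr : r = a * (V *ᵥ r + z)) : q ≤ r := by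
  have hfix : ∀ {p : ι → ℝ}, p = a * (V *ᵥ p + z) → ∀ k, p k = a k * ((V *ᵥ p) k + z k) :=
    fun hp k => congrFun hp k
  have hqpos : ∀ k, 0 < q k := fun k => by
    rw [hfix hq k]; exact mul_pos (ha k) (mulVec_add_pos hV hz hq0 k)
  by_contra hqr
  obtain ⟨k, hk⟩ : ∃ k, r k < q k := by simpa [Pi.le_def] using hqr
  obtain ⟨k₀, -, hk₀⟩ := Finset.exists_max_image Finset.univ (fun k => (q k - r k) / q k)
    ⟨k, Finset.mem_univ k⟩
  set α := (q k₀ - r k₀) / q k₀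
  have hα : 0 < α := (div_pos (sub_pos.2 hk) (hqpos k)).trans_le (hk₀ k (Finset.mem_univ k))
  have hdiff : q - r ≤ α • q := fun l => by
    simpa [div_le_iff₀ (hqpos l), mul_comm] using hk₀ l (Finset.mem_univ l)
  have hbound : (V *ᵥ (q - r)) k₀ ≤ α * (V *ᵥ q) k₀ := by
    simpa [mulVec_smul] using mulVec_apply_le_of_le hV hdiff k₀
  have hα_eq : α * q k₀ = q k₀ - r k₀ := div_mul_cancel₀ _ (hqpos k₀).ne'
  have hstep : q k₀ - r k₀ = a k₀ * (V *ᵥ (q - r)) k₀ := by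
    rw [hfix hq k₀, hfix hr k₀, mulVec_sub, Pi.sub_apply]; ring
  refine lt_irrefl (q k₀ - r k₀) ?_
  calc q k₀ - r k₀ = a k₀ * (V *ᵥ (q - r)) k₀ := hstep
    _ ≤ a k₀ * (α * (V *ᵥ q) k₀) := mul_le_mul_of_nonneg_left hbound (ha k₀).le
    _ = α * (q k₀ - a k₀ * z k₀) := by rw [hfix hq k₀]; ring
    _ < α * q k₀ := by have := mul_pos (ha k₀) (hz k₀); gcongr; linarith
    _ = q k₀ - r k₀ := hα_eq

lemma eq_of_eq_mul_mulVec_add (hV : ∀ i j, 0 ≤ V i j) (ha : ∀ k, 0 < a k) (hz : ∀ k, 0 < z k)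
    (hq0 : 0 ≤ q) (hr0 : 0 ≤ r) (hq : q = a * (V *ᵥ q + z)) (hr : r = a * (V *ᵥ r + z)) :
    q = r :=
  le_antisymm (le_of_eq_mul_mulVec_add hV ha hz hq0 hq hr)
    (le_of_eq_mul_mulVec_add hV ha hz hr0 hr hq)

end FixedPoint

section PowerControl

variable {K N : ℕ} {V : Matrix (Fin K) (Fin K) ℝ} {z γ : Fin K → ℝ}
  {C : Matrix (Fin N) (Fin K) ℝ} {phat : Fin N → ℝ} {p q : Fin K → ℝ}

lemma zero_mem_Pset (hphat : ∀ n, 0 ≤ phat n) : 0 ∈ Pset C phat :=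
  ⟨fun _ => le_rfl, fun n => by simpa using hphat n⟩

lemma mem_Pset_of_le (hC : ∀ n k, 0 ≤ C n k) (hp : p ∈ Pset C phat) (hq : 0 ≤ q) (hqp : q ≤ p) :
    q ∈ Pset C phat :=
  ⟨hq, fun n => (mulVec_apply_le_of_le hC hqp n).trans (hp.2 n)⟩

lemma isCompact_Pset (hC : ∀ n k, 0 ≤ C n k) (hCcol : ∀ k, ∃ n, C n k = 1) :
    IsCompact (Pset C phat) := by
  choose row hrow using hCcol
  have hclosed : IsClosed (Pset C phat) :=
    (isClosed_le continuous_const continuous_id).inter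
      (isClosed_le (continuous_const.matrix_mulVec continuous_id) continuous_const)
  refine (isCompact_Icc (a := 0) (b := fun k => phat (row k))).of_isClosed_subset hclosed
    fun p hp => ⟨hp.1, fun k => ?_⟩
  calc p k = C (row k) k * p k := by rw [hrow, one_mul]
    _ ≤ (C *ᵥ p) (row k) :=
      Finset.single_le_sum (f := fun j => C (row k) j * p j)
        (fun j _ => mul_nonneg (hC _ j) (hp.1 j)) (Finset.mem_univ k)
    _ ≤ phat (row k) := hp.2 _

lemma exists_pos_mem_Pset (hphat : ∀ n, 0 < phat n) : ∃ p ∈ Pset C phat, ∀ k, 0 < p k := by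
  have hsmall : ∀ᶠ ε in nhds (0 : ℝ), ∀ n, (C *ᵥ fun _ => ε) n < phat n :=
    Filter.eventually_all.2 fun n =>
      (((continuous_apply n).comp (continuous_const.matrix_mulVec
        (continuous_pi fun _ => continuous_id))).tendsto 0).eventually_lt_const
        (by simpa [← Pi.zero_def] using hphat n)
  obtain ⟨ε, hε, hεpos⟩ :=
    ((hsmall.filter_mono nhdsWithin_le_nhds).and self_mem_nhdsWithin).exists
      (f := nhdsWithin 0 (Set.Ioi 0))
  exact ⟨fun _ => ε, ⟨fun _ => le_of_lt hεpos, fun n => (hε n).le⟩, fun _ => hεpos⟩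

lemma div_le_SIR_of_le (hV : ∀ i j, 0 ≤ V i j) (hz : ∀ k, 0 < z k) (hq : 0 ≤ q) (hqp : q ≤ p)
    (k : Fin K) :
    q k / ((V *ᵥ p) k + z k) ≤ SIR V z q k :=
  div_le_div_of_nonneg_left (hq k) (mulVec_add_pos hV hz hq k)
    (add_le_add_left (mulVec_apply_le_of_le hV hqp k) _)

lemma div_lt_SIR_of_le (hV : ∀ i j, 0 ≤ V i j) (hz : ∀ k, 0 < z k) (hq : 0 ≤ q) (hqp : q ≤ p)
    {i j : Fin K} (hVij : 0 < V i j) (hj : q j < p j) (hi : 0 < q i) :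
    q i / ((V *ᵥ p) i + z i) < SIR V z q i :=
  div_lt_div_of_pos_left hi (mulVec_add_pos hV hz hq i)
    (add_lt_add_left (mulVec_apply_lt_of_le hV hqp hVij hj) _)

lemma continuousOn_iInf_SIR_div [Nonempty (Fin K)] (hV : ∀ i j, 0 ≤ V i j)
    (hz : ∀ k, 0 < z k) :
    ContinuousOn (fun p => ⨅ k, SIR V z p k / γ k) {p | 0 ≤ p} := by
  simp_rw [← Finset.inf'_univ_eq_ciInf]
  refine ContinuousOn.finset_inf'_apply _ fun k _ => ContinuousOn.div_const ?_ _
  exact (continuous_apply k).continuousOn.div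
    ((continuous_apply k).comp (continuous_const.matrix_mulVec continuous_id)
      |>.add continuous_const).continuousOn fun p hp => (mulVec_add_pos hV hz hp k).ne'

lemma exists_mem_Ioo_forall_lt_mul {ι : Type*} [Finite ι] {t : ℝ} {P : ι → Prop} {a : ι → ℝ}
    (h : ∀ k, P k → t < a k) : ∃ s ∈ Set.Ioo (0 : ℝ) 1, ∀ k, P k → t < s * a k := by
  have hnear : ∀ᶠ s in nhds (1 : ℝ), ∀ k, P k → t < s * a k :=
    Filter.eventually_all.2 fun k => Filter.eventually_imp_distrib_left.2 fun hk =>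
      ((continuous_id.mul continuous_const).tendsto' 1 (a k) (one_mul _)).eventually_const_lt
        (h k hk)
  obtain ⟨s, hs, hs01⟩ :=
    ((hnear.filter_mono nhdsWithin_le_nhds).and (Ioo_mem_nhdsLT zero_lt_one)).exists
  exact ⟨s, hs01, hs⟩

noncomputable def tightSet (V : Matrix (Fin K) (Fin K) ℝ) (z γ : Fin K → ℝ) (t : ℝ)
    (p : Fin K → ℝ) : Finset (Fin K) :=
  Finset.univ.filter fun k => SIR V z p k / γ k ≤ t

lemma mem_tightSet {t : ℝ} {k : Fin K} : k ∈ tightSet V z γ t p ↔ SIR V z p k / γ k ≤ t := by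
  simp [tightSet]

lemma exists_tightSet_ssubset (hV : ∀ i j, 0 ≤ V i j) (hz : ∀ k, 0 < z k)
    (hγ : ∀ k, 0 < γ k) (hC : ∀ n k, 0 ≤ C n k) (hirr : MatIrred V) {t : ℝ} (ht : 0 < t)
    (hq : q ∈ Pset C phat) (hqt : ∀ k, t ≤ SIR V z q k / γ k)
    (hne : (tightSet V z γ t q).Nonempty) (hnu : tightSet V z γ t q ≠ Finset.univ) :
    ∃ q' ∈ Pset C phat, (∀ k, t ≤ SIR V z q' k / γ k) ∧
      tightSet V z γ t q' ⊂ tightSet V z γ t q := by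
  set T := tightSet V z γ t q
  obtain ⟨i, hiT, j, hjT, hVij⟩ := hirr T (by exact_mod_cast hne) (by exact_mod_cast hnu)
  have hiT : i ∈ T := hiT
  have hjT : j ∉ T := hjT
  have hqpos : ∀ k, 0 < q k := fun k =>
    (div_pos_iff_of_pos_right (mulVec_add_pos hV hz hq.1 k)).1
      ((div_pos_iff_of_pos_right (hγ k)).1 (ht.trans_le (hqt k)))
  obtain ⟨s, ⟨hs0, hs1⟩, hs⟩ := exists_mem_Ioo_forall_lt_mul (P := fun k => k ∉ T)
    fun k hk => not_le.1 fun h => hk (mem_tightSet.2 h)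
  set q' : Fin K → ℝ := fun k => if k ∈ T then q k else s * q k
  have hq'0 : 0 ≤ q' := fun k => by
    by_cases hk : k ∈ T <;> simp only [q', hk, if_true, if_false]
    exacts [hq.1 k, mul_nonneg hs0.le (hq.1 k)]
  have hq'q : q' ≤ q := fun k => by
    by_cases hk : k ∈ T <;> simp only [q', hk, if_true, if_false]
    exacts [le_rfl, mul_le_of_le_one_left (hq.1 k) hs1.le]
  have hin : ∀ k ∈ T, SIR V z q k / γ k ≤ SIR V z q' k / γ k := fun k hk => by
    have := div_le_SIR_of_le hV hz hq'0 hq'q k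
    simp only [q', hk, if_true] at this
    exact div_le_div_of_nonneg_right this (hγ k).le
  have hout : ∀ k ∉ T, t < SIR V z q' k / γ k := fun k hk => by
    have := div_le_SIR_of_le hV hz hq'0 hq'q k
    simp only [q', hk, if_false, mul_div_assoc] at this
    calc t < s * (SIR V z q k / γ k) := hs k hk
      _ = s * SIR V z q k / γ k := (mul_div_assoc _ _ _).symm
      _ ≤ SIR V z q' k / γ k := div_le_div_of_nonneg_right this (hγ k).le
  have hi : t < SIR V z q' i / γ i := by
    have hqj : q' j < q j := by
      simpa [q', hjT] using mul_lt_of_lt_one_left (hqpos j) hs1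
    have := div_lt_SIR_of_le hV hz hq'0 hq'q hVij hqj (by simpa [q', hiT] using hqpos i)
    simp only [q', hiT, if_true] at this
    exact (hqt i).trans_lt (div_lt_div_of_pos_right this (hγ i))
  refine ⟨q', mem_Pset_of_le hC hq hq'0 hq'q, fun k => ?_, ?_⟩
  · by_cases hk : k ∈ T
    exacts [(hqt k).trans (hin k hk), (hout k hk).le]
  · refine Finset.ssubset_of_subset_of_ssubset (fun k hk => Finset.mem_erase.2 ⟨?_, ?_⟩)
      (Finset.erase_ssubset hiT)
    · rintro rfl
      exact not_lt.2 (mem_tightSet.1 hk) hi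
    · by_contra hkT
      exact not_lt.2 (mem_tightSet.1 hk) (hout k hkT)

lemma exists_forall_lt_SIR_div (hV : ∀ i j, 0 ≤ V i j) (hz : ∀ k, 0 < z k)
    (hγ : ∀ k, 0 < γ k) (hC : ∀ n k, 0 ≤ C n k) (hirr : MatIrred V) {t : ℝ} (ht : 0 < t)
    (hq : q ∈ Pset C phat) (hqt : ∀ k, t ≤ SIR V z q k / γ k)
    (hnu : tightSet V z γ t q ≠ Finset.univ) :
    ∃ q' ∈ Pset C phat, ∀ k, t < SIR V z q' k / γ k := by
  induction hT : tightSet V z γ t q using Finset.strongInduction generalizing q with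
  | H T ih =>
    subst hT
    obtain hemp | hne := (tightSet V z γ t q).eq_empty_or_nonempty
    · exact ⟨q, hq, fun k => not_le.1 fun h => by simpa [hemp] using mem_tightSet.2 h⟩
    · obtain ⟨q', hq', hq't, hss⟩ := exists_tightSet_ssubset hV hz hγ hC hirr ht hq hqt hne hnu
      exact ih _ hss hq' hq't (hss.trans_le (Finset.subset_univ _)).ne rfl

variable [Nonempty (Fin K)]

lemma exists_maxMinBalanced (hV : ∀ i j, 0 ≤ V i j) (hz : ∀ k, 0 < z k)
    (hC : ∀ n k, 0 ≤ C n k) (hCcol : ∀ k, ∃ n, C n k = 1) (hphat : ∀ n, 0 ≤ phat n) :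
    ∃ pbar, MaxMinBalanced V z γ C phat pbar := by
  obtain ⟨pbar, hmem, hmax⟩ := (isCompact_Pset hC hCcol).exists_isMaxOn
    ⟨0, zero_mem_Pset hphat⟩ ((continuousOn_iInf_SIR_div hV hz).mono fun p hp => hp.1)
  exact ⟨pbar, hmem, fun p hp => hmax hp⟩

namespace MaxMinBalanced

lemma iInf_SIR_div_pos (hV : ∀ i j, 0 ≤ V i j) (hz : ∀ k, 0 < z k) (hγ : ∀ k, 0 < γ k)
    (hphat : ∀ n, 0 < phat n) (h : MaxMinBalanced V z γ C phat q) :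
    0 < ⨅ k, SIR V z q k / γ k := by
  obtain ⟨p, hp, hpos⟩ := exists_pos_mem_Pset hphat
  obtain ⟨k, hk⟩ := exists_eq_ciInf_of_finite (f := fun k => SIR V z p k / γ k)
  refine lt_of_lt_of_le ?_ (h.2 p hp)
  rw [← hk]
  exact div_pos (div_pos (hpos k) (mulVec_add_pos hV hz hp.1 k)) (hγ k)

lemma SIR_div_eq (hV : ∀ i j, 0 ≤ V i j) (hz : ∀ k, 0 < z k) (hγ : ∀ k, 0 < γ k)
    (hC : ∀ n k, 0 ≤ C n k) (hphat : ∀ n, 0 < phat n) (hirr : MatIrred V)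
    (h : MaxMinBalanced V z γ C phat q) (k : Fin K) :
    SIR V z q k / γ k = ⨅ k, SIR V z q k / γ k := by
  set t := ⨅ k, SIR V z q k / γ k
  have hle : ∀ k, t ≤ SIR V z q k / γ k := ciInf_le (Set.finite_range _).bddBelow
  suffices hT : tightSet V z γ t q = Finset.univ from
    le_antisymm (mem_tightSet.1 (hT ▸ Finset.mem_univ k)) (hle k)
  by_contra hnu
  obtain ⟨q', hq', hq't⟩ := exists_forall_lt_SIR_div hV hz hγ hC hirr
    (h.iInf_SIR_div_pos hV hz hγ hphat) h.1 hle hnu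
  obtain ⟨k', hk'⟩ := exists_eq_ciInf_of_finite (f := fun k => SIR V z q' k / γ k)
  exact not_lt.2 (h.2 q' hq') (hk' ▸ hq't k')

lemma eq_mul_mulVec_add (hV : ∀ i j, 0 ≤ V i j) (hz : ∀ k, 0 < z k) (hγ : ∀ k, 0 < γ k)
    (hC : ∀ n k, 0 ≤ C n k) (hphat : ∀ n, 0 < phat n) (hirr : MatIrred V)
    (h : MaxMinBalanced V z γ C phat q) :
    q = ((⨅ k, SIR V z q k / γ k) • γ) * (V *ᵥ q + z) := funext fun k => by
  have hk := h.SIR_div_eq hV hz hγ hC hphat hirr k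
  have hD := mulVec_add_pos hV hz h.1.1 k
  rw [SIR, div_div, div_eq_iff (mul_pos hD (hγ k)).ne'] at hk
  rw [Pi.mul_apply, Pi.smul_apply, smul_eq_mul, Pi.add_apply, hk]
  ring

end MaxMinBalanced

end PowerControl

theorem stmt1_general    {K N : ℕ}
    (V : Matrix (Fin K) (Fin K) ℝ) (z γ : Fin K → ℝ)
    (C : Matrix (Fin N) (Fin K) ℝ) (phat : Fin N → ℝ)
    (hV : ∀ i j, 0 ≤ V i j)
    (hz : ∀ k, 0 < z k) (hγ : ∀ k, 0 < γ k)
    (hC : ∀ n k, C n k = 0 ∨ C n k = 1) (hCcol : ∀ k, ∃ n, C n k = 1)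
    (hphat : ∀ n, 0 < phat n)
    (hirr : MatIrred V)
 :
    ∃! pbar : Fin K → ℝ, MaxMinBalanced V z γ C phat pbar := by
  obtain hK | hK := isEmpty_or_nonempty (Fin K)
  · exact ⟨0, ⟨zero_mem_Pset fun n => (hphat n).le, fun p _ => by rw [Subsingleton.elim p 0]⟩,
      fun _ _ => Subsingleton.elim _ _⟩
  have hC0 : ∀ n k, 0 ≤ C n k := fun n k => by rcases hC n k with h | h <;> simp [h]
  obtain ⟨pbar, hpbar⟩ := exists_maxMinBalanced (γ := γ) hV hz hC0 hCcol fun n => (hphat n).le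
  refine ⟨pbar, hpbar, fun q hq => ?_⟩
  have hlevel : ⨅ k, SIR V z q k / γ k = ⨅ k, SIR V z pbar k / γ k :=
    le_antisymm (hpbar.2 q hq.1) (hq.2 pbar hpbar.1)
  have hq_fix := hq.eq_mul_mulVec_add hV hz hγ hC0 hphat hirr
  rw [hlevel] at hq_fix
  have hlevel_pos := hpbar.iInf_SIR_div_pos hV hz hγ hphat
  exact eq_of_eq_mul_mulVec_add hV (fun k => mul_pos hlevel_pos (hγ k)) hz hq.1.1 hpbar.1.1 hq_fix
    (hpbar.eq_mul_mulVec_add hV hz hγ hC0 hphat hirr)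

theorem stmt1    {K N : ℕ} (hK : 2 ≤ K) (hN : 1 ≤ N)
    (V : Matrix (Fin K) (Fin K) ℝ) (z γ : Fin K → ℝ)
    (C : Matrix (Fin N) (Fin K) ℝ) (phat : Fin N → ℝ)
    (hV : ∀ i j, 0 ≤ V i j) (hVdiag : ∀ i, V i i = 0)
    (hz : ∀ k, 0 < z k) (hγ : ∀ k, 0 < γ k)
    (hC : ∀ n k, C n k = 0 ∨ C n k = 1) (hCcol : ∀ k, ∃ n, C n k = 1)
    (hphat : ∀ n, 0 < phat n)
    (hirr : MatIrred V)
 :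
    ∃! pbar : Fin K → ℝ, MaxMinBalanced V z γ C phat pbar :=
  stmt1_general V z γ C phat hV hz hγ hC hCcol hphat hirr
end

section
/- Suppose the gain matrix V is irreducible, p̄ ∈ P is the max-min SIR-balanced power vector, and β > 0 is the common value of γ_k/SIR_k(p̄) over k = 1,…,K. Then for every n ∈ N₀(p̄), both eigenvalue equations hold: B^(n) p̄ = β p̄, and A^(n) p̃ = β p̃ where p̃ = (p̄, 1) ∈ ℝ^{K+1} is the extended power vector. -/
open Matrix

/-!
Since `γₖ / SIRₖ(p̄) = β`, every link satisfies `γₖ (V p̄ + z)ₖ = β p̄ₖ`, i.e. `Γ (V p̄ + z) = β p̄`.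
On an active constraint `cₙᵀ p̄ = Pₙ`, so the rank-one part of `B⁽ⁿ⁾` contributes exactly `Γ z`,
and the last row of `A⁽ⁿ⁾` is `(1/Pₙ) cₙᵀ` applied to its first `K` rows, which gives `β`.
-/

theorem mul_eq_mul_of_div_div_eq {F : Type*} [Field F] {a b c d : F}
    (h : c / (a / b) = d) (hd : d ≠ 0) : c * b = d * a := by
  rw [div_div_eq_mul_div] at h
  have ha : a ≠ 0 := by rintro rfl; exact hd (by simpa using h.symm)
  rw [← h, div_mul_cancel₀ _ ha]

theorem Fin.smul_snoc {α : Type*} [Mul α] {n : ℕ} (c : α) (p : Fin n → α) (t : α) :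
    c • (Fin.snoc p t : Fin (n + 1) → α) = Fin.snoc (c • p) (c * t) := by
  ext i
  refine Fin.lastCases ?_ (fun i => ?_) i <;> simp

section PowerControl

variable {K N : ℕ} (V : Matrix (Fin K) (Fin K) ℝ) (z γ : Fin K → ℝ)
  (C : Matrix (Fin N) (Fin K) ℝ) (phat : Fin N → ℝ) (n : Fin N)

theorem gcon_smul (c : ℝ) (p : Fin K → ℝ) : gcon C phat n (c • p) = c * gcon C phat n p := by
  rw [gcon, gcon, mulVec_smul, Pi.smul_apply, smul_eq_mul, mul_div_assoc]

theorem mul_mulVec_add_eq_smul_of_div_SIR_eq {p : Fin K → ℝ} {β : ℝ} (hβ : β ≠ 0)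
    (h : ∀ k, γ k / SIR V z p k = β) : γ * (V *ᵥ p + z) = β • p :=
  funext fun k => mul_eq_mul_of_div_div_eq (h k) hβ

theorem Bmat_mulVec (p : Fin K → ℝ) :
    Bmat V z γ C phat n *ᵥ p = γ * (V *ᵥ p + gcon C phat n p • z) := by
  ext k
  rw [Bmat, ← mulVec_mulVec, mulVec_diagonal, add_mulVec, smul_mulVec, vecMulVec_mulVec]
  simp only [gcon, mulVec, dotProduct, Pi.mul_apply, Pi.add_apply, Pi.smul_apply,
    op_smul_eq_smul, smul_eq_mul]
  ring

theorem Amat_mulVec_snoc (p : Fin K → ℝ) (t : ℝ) :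
    Amat V z γ C phat n *ᵥ Fin.snoc p t =
      Fin.snoc (γ * (V *ᵥ p + t • z)) (gcon C phat n (γ * (V *ᵥ p + t • z))) := by
  ext i
  refine Fin.lastCases ?_ (fun i => ?_) i
  · simp only [mulVec, dotProduct, Amat, of_apply, Fin.val_last, lt_self_iff_false, ↓reduceDIte,
      dite_mul, Fin.sum_univ_castSucc, Fin.val_castSucc, Fin.is_lt, Fin.eta, Fin.snoc_castSucc,
      Fin.snoc_last, gcon, Pi.mul_apply, Pi.add_apply, Pi.smul_apply, smul_eq_mul, div_eq_inv_mul,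
      mul_add, Finset.mul_sum, Finset.sum_mul, Finset.sum_add_distrib]
    rw [Finset.sum_comm]
    congr 1
    · exact Finset.sum_congr rfl fun _ _ => Finset.sum_congr rfl fun _ _ => by ring
    · exact Finset.sum_congr rfl fun _ _ => by ring
  · simp only [mulVec, dotProduct, Amat, of_apply, Fin.val_castSucc, Fin.is_lt, ↓reduceDIte, Fin.eta,
      dite_mul, Fin.sum_univ_castSucc, Fin.snoc_castSucc, Fin.val_last, lt_self_iff_false,
      Fin.snoc_last, Pi.mul_apply, Pi.add_apply, Pi.smul_apply, smul_eq_mul, mul_add,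
      Finset.mul_sum, mul_assoc]
    ring

end PowerControl

theorem stmt4_general    {K N : ℕ}
    (V : Matrix (Fin K) (Fin K) ℝ) (z γ : Fin K → ℝ)
    (C : Matrix (Fin N) (Fin K) ℝ) (phat : Fin N → ℝ)
    (pbar : Fin K → ℝ)
    (β : ℝ) (hβ : 0 < β) (hcomm : ∀ k, γ k / SIR V z pbar k = β) :
    ∀ n ∈ activeSet C phat pbar,
      (Bmat V z γ C phat n) *ᵥ pbar = β • pbar ∧
      (Amat V z γ C phat n) *ᵥ (Fin.snoc pbar 1) = β • (Fin.snoc pbar 1 : Fin (K+1) → ℝ) := by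
  intro n hn
  have hfix : γ * (V *ᵥ pbar + z) = β • pbar :=
    mul_mulVec_add_eq_smul_of_div_SIR_eq V z γ hβ.ne' hcomm
  have hactive : gcon C phat n pbar = 1 := hn.1
  constructor
  · rw [Bmat_mulVec, hactive, one_smul, hfix]
  · rw [Amat_mulVec_snoc, one_smul, hfix, gcon_smul, hactive, Fin.smul_snoc, mul_one]

theorem stmt4    {K N : ℕ} (hK : 2 ≤ K) (hN : 1 ≤ N)
    (V : Matrix (Fin K) (Fin K) ℝ) (z γ : Fin K → ℝ)
    (C : Matrix (Fin N) (Fin K) ℝ) (phat : Fin N → ℝ)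
    (hV : ∀ i j, 0 ≤ V i j) (hVdiag : ∀ i, V i i = 0)
    (hz : ∀ k, 0 < z k) (hγ : ∀ k, 0 < γ k)
    (hC : ∀ n k, C n k = 0 ∨ C n k = 1) (hCcol : ∀ k, ∃ n, C n k = 1)
    (hphat : ∀ n, 0 < phat n)
    (hirr : MatIrred V)
    (pbar : Fin K → ℝ) (hbal : MaxMinBalanced V z γ C phat pbar)
    (β : ℝ) (hβ : 0 < β) (hcomm : ∀ k, γ k / SIR V z pbar k = β) :
    ∀ n ∈ activeSet C phat pbar,
      (Bmat V z γ C phat n) *ᵥ pbar = β • pbar ∧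
      (Amat V z γ C phat n) *ᵥ (Fin.snoc pbar 1) = β • (Fin.snoc pbar 1 : Fin (K+1) → ℝ) :=
  stmt4_general V z γ C phat pbar β hβ hcomm
end

section
/- If the gain matrix V is irreducible, then for every n = 1,…,N the spectral radii of the extended matrix and of the reduced matrix coincide: ρ(A^(n)) = ρ(B^(n)). -/
open Matrix

/-!
`A⁽ⁿ⁾` and `B⁽ⁿ⁾` are the two products `X Y` and `Y X` of the rectangular matrices
`X = [I ; Pₙ⁻¹ cₙᵀ]` and `Y = Γ [V z]`. Since `tᴷ χ_{XY}(t) = tᴷ⁺¹ χ_{YX}(t)` (Sylvester's identity for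
rectangular factors), `XY` and `YX` have the same nonzero eigenvalues, and zero eigenvalues do
not affect the spectral radius.
-/

lemma Real.sSup_insert_zero {S : Set ℝ} (hS : BddAbove S) (hS₀ : ∀ x ∈ S, 0 ≤ x) :
    sSup (insert 0 S) = sSup S := by
  rcases S.eq_empty_or_nonempty with rfl | hne
  · simp
  · rw [csSup_insert hS hne, sup_eq_right]
    exact Real.sSup_nonneg hS₀

lemma Complex.sSup_norm_image_sdiff_zero {S : Set ℂ} (hS : S.Finite) :
    sSup (norm '' (S \ {0})) = sSup (norm '' S) := by
  by_cases h₀ : (0 : ℂ) ∈ S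
  · conv_rhs => rw [← Set.insert_sdiff_self_of_mem h₀, Set.image_insert_eq, norm_zero]
    refine (Real.sSup_insert_zero ((hS.sdiff.image _).bddAbove) ?_).symm
    rintro _ ⟨w, -, rfl⟩
    exact norm_nonneg w
  · rw [Set.sdiff_singleton_eq_self h₀]

namespace Matrix

variable {m n 𝕜 : Type*} [Fintype m] [DecidableEq m] [Fintype n] [DecidableEq n] [Field 𝕜]

theorem spectrum_mul_comm_sdiff_zero (A : Matrix m n 𝕜) (B : Matrix n m 𝕜) :
    spectrum 𝕜 (A * B) \ {0} = spectrum 𝕜 (B * A) \ {0} := by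
  ext μ
  simp only [Set.mem_sdiff, Set.mem_singleton_iff, mem_spectrum_iff_isRoot_charpoly,
    and_congr_left_iff, Polynomial.IsRoot.def]
  intro hμ
  have h := congrArg (Polynomial.eval μ) (charpoly_mul_comm' A B)
  simp only [Polynomial.eval_mul, Polynomial.eval_pow, Polynomial.eval_X] at h
  constructor <;> intro h' <;> simpa [h', hμ] using h

end Matrix

lemma specRad_eq_sSup_norm_spectrum_sdiff_zero {m : Type*} [Fintype m] [DecidableEq m]
    (M : Matrix m m ℝ) :
    specRad M = sSup (norm '' (spectrum ℂ (M.map Complex.ofRealHom) \ {0})) :=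
  (Complex.sSup_norm_image_sdiff_zero (Matrix.finite_spectrum _)).symm

theorem specRad_mul_comm {m n : Type*} [Fintype m] [DecidableEq m] [Fintype n] [DecidableEq n]
    (A : Matrix m n ℝ) (B : Matrix n m ℝ) : specRad (A * B) = specRad (B * A) := by
  rw [specRad_eq_sSup_norm_spectrum_sdiff_zero, specRad_eq_sSup_norm_spectrum_sdiff_zero,
    Matrix.map_mul (f := Complex.ofRealHom), Matrix.map_mul (f := Complex.ofRealHom),
    Matrix.spectrum_mul_comm_sdiff_zero]

/-- The `(K+1) × K` matrix `[I ; Pₙ⁻¹ cₙᵀ]`. -/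
noncomputable def constraintFactor {K N : ℕ} (C : Matrix (Fin N) (Fin K) ℝ)
    (phat : Fin N → ℝ) (n : Fin N) : Matrix (Fin (K+1)) (Fin K) ℝ :=
  Matrix.of fun i k =>
    if hi : (i : ℕ) < K then (if (⟨i, hi⟩ : Fin K) = k then 1 else 0)
    else (phat n)⁻¹ * C n k

/-- The `K × (K+1)` matrix `Γ [V z]`. -/
noncomputable def gainFactor {K : ℕ} (V : Matrix (Fin K) (Fin K) ℝ) (z γ : Fin K → ℝ) :
    Matrix (Fin K) (Fin (K+1)) ℝ :=
  Matrix.of fun k j =>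
    if hj : (j : ℕ) < K then γ k * V k ⟨j, hj⟩ else γ k * z k

section Factorization

variable {K N : ℕ} (V : Matrix (Fin K) (Fin K) ℝ) (z γ : Fin K → ℝ)
  (C : Matrix (Fin N) (Fin K) ℝ) (phat : Fin N → ℝ) (n : Fin N)

lemma Amat_eq_constraintFactor_mul_gainFactor :
    Amat V z γ C phat n = constraintFactor C phat n * gainFactor V z γ := by
  ext i j
  by_cases hi : (i : ℕ) < K
  · simp [Amat, constraintFactor, gainFactor, mul_apply, hi]
  · by_cases hj : (j : ℕ) < K <;>
      simp [Amat, constraintFactor, gainFactor, mul_apply, hi, hj, Finset.mul_sum, mul_assoc]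

lemma Bmat_eq_gainFactor_mul_constraintFactor :
    Bmat V z γ C phat n = gainFactor V z γ * constraintFactor C phat n := by
  ext k l
  rw [Bmat, diagonal_mul]
  simp [constraintFactor, gainFactor, mul_apply, Fin.sum_univ_castSucc, vecMulVec_apply]
  ring

end Factorization

theorem stmt8_general    {K N : ℕ}
    (V : Matrix (Fin K) (Fin K) ℝ) (z γ : Fin K → ℝ)
    (C : Matrix (Fin N) (Fin K) ℝ) (phat : Fin N → ℝ)
 :
    ∀ n, specRad (Amat V z γ C phat n) = specRad (Bmat V z γ C phat n) := by
  intro n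
  rw [Amat_eq_constraintFactor_mul_gainFactor, Bmat_eq_gainFactor_mul_constraintFactor]
  exact specRad_mul_comm _ _

theorem stmt8    {K N : ℕ} (hK : 2 ≤ K) (hN : 1 ≤ N)
    (V : Matrix (Fin K) (Fin K) ℝ) (z γ : Fin K → ℝ)
    (C : Matrix (Fin N) (Fin K) ℝ) (phat : Fin N → ℝ)
    (hV : ∀ i j, 0 ≤ V i j) (hVdiag : ∀ i, V i i = 0)
    (hz : ∀ k, 0 < z k) (hγ : ∀ k, 0 < γ k)
    (hC : ∀ n k, C n k = 0 ∨ C n k = 1) (hCcol : ∀ k, ∃ n, C n k = 1)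
    (hphat : ∀ n, 0 < phat n)
    (hirr : MatIrred V)
 :
    ∀ n, specRad (Amat V z γ C phat n) = specRad (Bmat V z γ C phat n) :=
  stmt8_general V z γ C phat
end

section
/- Suppose the gain matrix V is irreducible. Let n₀ ∈ {1,…,N} be any index with ρ(B^(n₀)) = max_{1≤n≤N} ρ(B^(n)), and let p be the unique strictly positive vector satisfying B^(n₀) p = ρ(B^(n₀)) p and c_{n₀}ᵀ p = P_{n₀}. Then p ∈ P and p is the max-min SIR-balanced power vector, i.e., p maximizes q ↦ min_k SIR_k(q)/γ_k over P. -/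
open Matrix

/-!
With `ρ = ρ(B⁽ⁿ⁰⁾)`, the normalisation `c_{n₀}ᵀ p = P_{n₀}` turns the eigen-equation into
`ρ p = Γ (V p + z)`, so `SIR_k(p)/γ_k = 1/ρ` for every `k`. If a constraint `n` were violated,
then `B⁽ⁿ⁾ p ≥ (ρ + ε) p` entrywise, and the Collatz–Wielandt bound (a consequence of Gelfand's
formula) would give `ρ(B⁽ⁿ⁾) > ρ`, contradicting the choice of `n₀`. If some `q ∈ P` had all
`SIR_k(q)/γ_k > 1/ρ`, then `Γ (V q + z) < ρ q`; comparing with `p` at an index minimising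
`q_k / p_k` forces `q > p` entrywise, so `q` violates the `n₀`-th constraint.
-/

open Filter Topology

theorem spectrum.ofReal_le_spectralRadius_of_mul_pow_le_norm_pow {A : Type*} [NormedRing A]
    [NormedAlgebra ℂ A] [CompleteSpace A] (a : A) {c r : ℝ} (hc : 0 < c) (hr : 0 ≤ r)
    (h : ∀ m : ℕ, c * r ^ m ≤ ‖a ^ m‖) : ENNReal.ofReal r ≤ spectralRadius ℂ a := by
  have hroot : Tendsto (fun m : ℕ => c ^ (m⁻¹ : ℝ)) atTop (𝓝 1) := by
    have := (Real.continuousAt_const_rpow hc.ne').tendsto.comp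
      (tendsto_inv_atTop_nhds_zero_nat (𝕜 := ℝ))
    rwa [Real.rpow_zero] at this
  have hlow : Tendsto (fun m : ℕ => ENNReal.ofReal (c ^ (m⁻¹ : ℝ) * r)) atTop
      (𝓝 (ENNReal.ofReal r)) :=
    (ENNReal.continuous_ofReal.tendsto r).comp (by simpa using hroot.mul_const r)
  refine le_of_tendsto_of_tendsto hlow
    (spectrum.pow_norm_pow_one_div_tendsto_nhds_spectralRadius a) ?_
  filter_upwards [eventually_ne_atTop 0] with m hm
  refine ENNReal.ofReal_le_ofReal ?_
  calc c ^ (m⁻¹ : ℝ) * r = (c * r ^ m) ^ (m⁻¹ : ℝ) := by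
        rw [Real.mul_rpow hc.le (by positivity), Real.pow_rpow_inv_natCast hr hm]
    _ ≤ ‖a ^ m‖ ^ (1 / m : ℝ) := by
        rw [one_div]; exact Real.rpow_le_rpow (by positivity) (h m) (by positivity)

namespace Matrix

variable {ι : Type*} [Fintype ι] [DecidableEq ι]

omit [DecidableEq ι] in
theorem mulVec_mono_of_nonneg_s10 {M : Matrix ι ι ℝ} (hM : ∀ i j, 0 ≤ M i j) {x y : ι → ℝ}
    (hxy : x ≤ y) : M *ᵥ x ≤ M *ᵥ y :=
  fun i => dotProduct_le_dotProduct_of_nonneg_left hxy (hM i)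

theorem pow_smul_le_pow_mulVec {M : Matrix ι ι ℝ} (hM : ∀ i j, 0 ≤ M i j) {q : ι → ℝ} {r : ℝ}
    (hr : 0 ≤ r) (h : r • q ≤ M *ᵥ q) (m : ℕ) : r ^ m • q ≤ M ^ m *ᵥ q := by
  induction m with
  | zero => simp
  | succ m ih =>
    calc r ^ (m + 1) • q = r • (r ^ m • q) := by rw [pow_succ', mul_smul]
      _ ≤ r • (M ^ m *ᵥ q) := smul_le_smul_of_nonneg_left ih hr
      _ = M ^ m *ᵥ (r • q) := (mulVec_smul _ _ _).symm
      _ ≤ M ^ m *ᵥ (M *ᵥ q) := mulVec_mono_of_nonneg_s10 (pow_apply_nonneg hM m) h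
      _ = M ^ (m + 1) *ᵥ q := by rw [mulVec_mulVec, pow_succ]

omit [DecidableEq ι] in
theorem mulVec_apply_lt_mulVec_apply {m : Type*} {C : Matrix m ι ℝ} {i : m}
    (hC : ∀ j, 0 ≤ C i j) (hCi : C i ≠ 0) {x y : ι → ℝ} (hxy : ∀ j, x j < y j) :
    (C *ᵥ x) i < (C *ᵥ y) i := by
  obtain ⟨j, hj⟩ := Function.ne_iff.1 hCi
  exact Finset.sum_lt_sum (fun k _ => mul_le_mul_of_nonneg_left (hxy k).le (hC k))
    ⟨j, Finset.mem_univ _, mul_lt_mul_of_pos_left (hxy j) ((hC j).lt_of_ne' hj)⟩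

end Matrix

section SpectralRadius

attribute [local instance] Matrix.linftyOpSeminormedAddCommGroup
  Matrix.linftyOpNormedRing Matrix.linftyOpNormedAlgebra

theorem Matrix.linfty_opNorm_map_eq {m n α β : Type*} [Fintype m] [Fintype n]
    [SeminormedAddCommGroup α] [SeminormedAddCommGroup β] (A : Matrix m n α) (f : α → β)
    (hf : ∀ a, ‖f a‖ = ‖a‖) : ‖A.map f‖ = ‖A‖ := by
  have hf' : ∀ a, ‖f a‖₊ = ‖a‖₊ := fun a => NNReal.eq (hf a)
  simp only [linfty_opNorm_def, map_apply, hf']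

variable {ι : Type*} [Fintype ι] [DecidableEq ι]

theorem specRad_nonneg (M : Matrix ι ι ℝ) : 0 ≤ specRad M :=
  Real.sSup_nonneg (by rintro _ ⟨μ, -, rfl⟩; exact norm_nonneg μ)

theorem spectralRadius_map_ofReal_le (M : Matrix ι ι ℝ) :
    spectralRadius ℂ (M.map ((↑) : ℝ → ℂ)) ≤ ENNReal.ofReal (specRad M) := by
  have hbdd : BddAbove ((fun w : ℂ => ‖w‖) '' spectrum ℂ (M.map ((↑) : ℝ → ℂ))) :=
    ((spectrum.isCompact _).image continuous_norm).bddAbove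
  refine iSup₂_le fun μ hμ => ?_
  rw [← enorm_eq_nnnorm, ← ofReal_norm]
  exact ENNReal.ofReal_le_ofReal (le_csSup hbdd ⟨μ, hμ, rfl⟩)

theorem le_specRad_of_smul_le_mulVec {M : Matrix ι ι ℝ} (hM : ∀ i j, 0 ≤ M i j) {q : ι → ℝ}
    (hq : 0 ≤ q) (hq0 : q ≠ 0) {r : ℝ} (h : r • q ≤ M *ᵥ q) : r ≤ specRad M := by
  rcases lt_or_ge r 0 with hr | hr
  · exact hr.le.trans (specRad_nonneg M)
  obtain ⟨i, hi⟩ : ∃ i, 0 < q i := by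
    by_contra! hle
    exact hq0 (funext fun i => le_antisymm (hle i) (hq i))
  have hqn : 0 < ‖q‖ := norm_pos_iff.2 hq0
  have hgrowth : ∀ m : ℕ, q i / ‖q‖ * r ^ m ≤ ‖M.map ((↑) : ℝ → ℂ) ^ m‖ := by
    intro m
    have hpow : M.map ((↑) : ℝ → ℂ) ^ m = (M ^ m).map ((↑) : ℝ → ℂ) :=
      (M.map_pow Complex.ofRealHom m).symm
    rw [hpow, Matrix.linfty_opNorm_map_eq _ _ Complex.norm_real]
    calc q i / ‖q‖ * r ^ m = (r ^ m • q) i / ‖q‖ := by rw [Pi.smul_apply, smul_eq_mul]; ring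
      _ ≤ (M ^ m *ᵥ q) i / ‖q‖ := by gcongr; exact Matrix.pow_smul_le_pow_mulVec hM hr h m i
      _ ≤ ‖M ^ m *ᵥ q‖ / ‖q‖ := by gcongr; exact (Real.le_norm_self _).trans (norm_le_pi_norm _ i)
      _ ≤ ‖M ^ m‖ :=
        div_le_of_le_mul₀ (norm_nonneg _) (norm_nonneg _) (Matrix.linfty_opNorm_mulVec _ _)
  exact (ENNReal.ofReal_le_ofReal_iff (specRad_nonneg M)).1 <|
    (spectrum.ofReal_le_spectralRadius_of_mul_pow_le_norm_pow _ (div_pos hi hqn) hr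
      hgrowth).trans (spectralRadius_map_ofReal_le M)

end SpectralRadius

theorem exists_pos_mul_le {ι : Type*} [Finite ι] {x : ι → ℝ} (hx : ∀ i, 0 < x i) (y : ι → ℝ) :
    ∃ ε > 0, ∀ i, ε * y i ≤ x i := by
  have hsmall : ∀ i, ∀ᶠ ε in 𝓝 (0 : ℝ), ε * y i < x i := fun i =>
    ((continuous_id.mul continuous_const).tendsto' 0 0 (zero_mul _)).eventually
      (gt_mem_nhds (hx i))
  obtain ⟨ε, hε, hεpos⟩ :=
    ((eventually_all.2 hsmall).filter_mono nhdsWithin_le_nhds |>.and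
      (self_mem_nhdsWithin : Set.Ioi (0 : ℝ) ∈ 𝓝[>] 0)).exists
  exact ⟨ε, hεpos, fun i => (hε i).le⟩

theorem lt_of_mul_mulVec_add_lt_mul {ι : Type*} [Fintype ι] {V : Matrix ι ι ℝ}
    (hV : ∀ i j, 0 ≤ V i j) {γ b : ι → ℝ} (hγ : ∀ i, 0 ≤ γ i) (hb : ∀ i, 0 ≤ b i) {ρ : ℝ}
    {p q : ι → ℝ} (hp : ∀ i, 0 < p i) (hpfix : ∀ i, ρ * p i = γ i * ((V *ᵥ p) i + b i))
    (hq : ∀ i, γ i * ((V *ᵥ q) i + b i) < ρ * q i) (i : ι) : p i < q i := by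
  by_contra! hqi
  have : Nonempty ι := ⟨i⟩
  obtain ⟨k, hk⟩ := Finite.exists_min fun j => q j / p j
  set u := q k / p k
  have hu : u ≤ 1 := (hk i).trans ((div_le_one (hp i)).2 hqi)
  have hup : u • p ≤ q := fun j => (le_div_iff₀ (hp j)).1 (hk j)
  have hqk : q k = u * p k := (div_mul_cancel₀ _ (hp k).ne').symm
  refine (hq k).not_ge ?_
  calc γ k * ((V *ᵥ q) k + b k) ≥ γ k * ((V *ᵥ (u • p)) k + u * b k) :=
        mul_le_mul_of_nonneg_left (add_le_add (Matrix.mulVec_mono_of_nonneg_s10 hV hup k)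
          (mul_le_of_le_one_left (hb k) hu)) (hγ k)
    _ = u * (γ k * ((V *ᵥ p) k + b k)) := by
        rw [Matrix.mulVec_smul, Pi.smul_apply, smul_eq_mul]; ring
    _ = ρ * q k := by rw [hqk, ← hpfix]; ring

section PowerControl

variable {K N : ℕ} {V : Matrix (Fin K) (Fin K) ℝ} {z γ : Fin K → ℝ}
  {C : Matrix (Fin N) (Fin K) ℝ} {phat : Fin N → ℝ} {ρ : ℝ} {p : Fin K → ℝ}

theorem Bmat_mulVec_apply (n : Fin N) (x : Fin K → ℝ) (k : Fin K) :
    (Bmat V z γ C phat n *ᵥ x) k = γ k * ((V *ᵥ x) k + (C *ᵥ x) n / phat n * z k) := by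
  simp only [Bmat, ← Matrix.mulVec_mulVec, Matrix.mulVec_diagonal, Matrix.add_mulVec,
    Matrix.smul_mulVec, Matrix.vecMulVec_mulVec, Pi.add_apply, Pi.smul_apply, smul_eq_mul,
    MulOpposite.smul_eq_mul_unop, MulOpposite.unop_op]
  rw [show (C *ᵥ x) n = C n ⬝ᵥ x from rfl]
  ring

theorem Bmat_apply_nonneg (hV : ∀ i j, 0 ≤ V i j) (hz : ∀ k, 0 ≤ z k) (hγ : ∀ k, 0 ≤ γ k)
    (hC : ∀ n k, 0 ≤ C n k) (hphat : ∀ n, 0 ≤ phat n) (n : Fin N) (i j : Fin K) :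
    0 ≤ Bmat V z γ C phat n i j := by
  simp only [Bmat, Matrix.diagonal_mul, Matrix.add_apply, Matrix.smul_apply,
    Matrix.vecMulVec_apply, smul_eq_mul]
  have := hphat n; have := hC n j; have := hV i j; have := hz i; have := hγ i
  positivity

theorem SIR_div_eq (V : Matrix (Fin K) (Fin K) ℝ) (z γ q : Fin K → ℝ) (k : Fin K) :
    SIR V z q k / γ k = q k / (γ k * ((V *ᵥ q) k + z k)) := by
  rw [SIR, div_div, mul_comm]

theorem mem_Pset_of_fixedPoint (hV : ∀ i j, 0 ≤ V i j) (hz : ∀ k, 0 < z k) (hγ : ∀ k, 0 < γ k)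
    (hC : ∀ n k, 0 ≤ C n k) (hphat : ∀ n, 0 < phat n)
    (hρ : ∀ n, specRad (Bmat V z γ C phat n) ≤ ρ) (hp : ∀ k, 0 < p k)
    (hfix : ∀ k, ρ * p k = γ k * ((V *ᵥ p) k + z k)) : p ∈ Pset C phat := by
  refine ⟨fun k => (hp k).le, fun n => ?_⟩
  by_contra! hgt
  have ht : 1 < (C *ᵥ p) n / phat n := (one_lt_div (hphat n)).2 hgt
  obtain ⟨ε, hε, hεp⟩ := exists_pos_mul_le
    (x := fun k => ((C *ᵥ p) n / phat n - 1) * (γ k * z k))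
    (fun k => mul_pos (by linarith) (mul_pos (hγ k) (hz k))) p
  have hsuper : (ρ + ε) • p ≤ Bmat V z γ C phat n *ᵥ p := fun k => by
    rw [Pi.smul_apply, smul_eq_mul, Bmat_mulVec_apply]
    linarith [hfix k, hεp k]
  have hp0 : p ≠ 0 := by
    rintro rfl
    simp only [Matrix.mulVec_zero, Pi.zero_apply] at hgt
    exact (hphat n).not_gt hgt
  have hle := le_specRad_of_smul_le_mulVec
    (Bmat_apply_nonneg hV (fun k => (hz k).le) (fun k => (hγ k).le) hC (fun n => (hphat n).le) n)
    (fun k => (hp k).le) hp0 hsuper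
  linarith [hρ n]

theorem iInf_SIR_div_le_of_fixedPoint (hV : ∀ i j, 0 ≤ V i j) (hz : ∀ k, 0 < z k)
    (hγ : ∀ k, 0 < γ k) (hC : ∀ n k, 0 ≤ C n k) {n₀ : Fin N} (hphat : 0 < phat n₀)
    (hp : ∀ k, 0 < p k) (hfix : ∀ k, ρ * p k = γ k * ((V *ᵥ p) k + z k))
    (hnorm : (C *ᵥ p) n₀ = phat n₀) {q : Fin K → ℝ} (hq : q ∈ Pset C phat) :
    ⨅ k, SIR V z q k / γ k ≤ ⨅ k, SIR V z p k / γ k := by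
  have hrow : C n₀ ≠ 0 := fun h => hphat.ne' <| by
    rw [← hnorm, show (C *ᵥ p) n₀ = C n₀ ⬝ᵥ p from rfl, h, zero_dotProduct]
  obtain ⟨j₀, -⟩ := Function.ne_iff.1 hrow
  have : Nonempty (Fin K) := ⟨j₀⟩
  have hden : ∀ x : Fin K → ℝ, 0 ≤ x → ∀ k, 0 < γ k * ((V *ᵥ x) k + z k) := fun x hx k =>
    mul_pos (hγ k) (add_pos_of_nonneg_of_pos (dotProduct_nonneg_of_nonneg (hV k) hx) (hz k))
  have hρ : 0 < ρ :=
    pos_of_mul_pos_left ((hfix j₀).symm ▸ hden p (fun k => (hp k).le) j₀) (hp j₀).le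
  have hbal : ∀ k, SIR V z p k / γ k = ρ⁻¹ := fun k => by
    rw [SIR_div_eq, ← hfix k, div_mul_cancel_right₀ (hp k).ne']
  simp only [hbal, ciInf_const]
  by_contra! hgt
  have hsub : ∀ k, γ k * ((V *ᵥ q) k + z k) < ρ * q k := fun k => by
    have hk := hgt.trans_le (ciInf_le (Set.finite_range _).bddBelow k)
    rw [SIR_div_eq, lt_div_iff₀ (hden q hq.1 k)] at hk
    exact (inv_mul_lt_iff₀ hρ).1 hk
  have hlt := lt_of_mul_mulVec_add_lt_mul hV (fun k => (hγ k).le) (fun k => (hz k).le) hp hfix hsub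
  exact (hq.2 n₀).not_gt (hnorm ▸ Matrix.mulVec_apply_lt_mulVec_apply (hC n₀) hrow hlt)

end PowerControl

theorem stmt10_general    {K N : ℕ}
    (V : Matrix (Fin K) (Fin K) ℝ) (z γ : Fin K → ℝ)
    (C : Matrix (Fin N) (Fin K) ℝ) (phat : Fin N → ℝ)
    (hV : ∀ i j, 0 ≤ V i j)
    (hz : ∀ k, 0 < z k) (hγ : ∀ k, 0 < γ k)
    (hC : ∀ n k, C n k = 0 ∨ C n k = 1)
    (hphat : ∀ n, 0 < phat n)
    (n₀ : Fin N) (hn₀ : ∀ n, specRad (Bmat V z γ C phat n) ≤ specRad (Bmat V z γ C phat n₀))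
    (p : Fin K → ℝ) (hp : ∀ k, 0 < p k)
    (heig : (Bmat V z γ C phat n₀) *ᵥ p = specRad (Bmat V z γ C phat n₀) • p)
    (hnorm : C.mulVec p n₀ = phat n₀) :
    MaxMinBalanced V z γ C phat p := by
  have hC0 : ∀ n k, 0 ≤ C n k := fun n k => by rcases hC n k with h | h <;> simp [h]
  have hfix : ∀ k, specRad (Bmat V z γ C phat n₀) * p k = γ k * ((V *ᵥ p) k + z k) := fun k => by
    have hk := congrFun heig k
    rw [Bmat_mulVec_apply, hnorm, div_self (hphat n₀).ne', one_mul, Pi.smul_apply,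
      smul_eq_mul] at hk
    exact hk.symm
  exact ⟨mem_Pset_of_fixedPoint hV hz hγ hC0 hphat hn₀ hp hfix,
    fun q hq => iInf_SIR_div_le_of_fixedPoint hV hz hγ hC0 (hphat n₀) hp hfix hnorm hq⟩

theorem stmt10    {K N : ℕ} (hK : 2 ≤ K) (hN : 1 ≤ N)
    (V : Matrix (Fin K) (Fin K) ℝ) (z γ : Fin K → ℝ)
    (C : Matrix (Fin N) (Fin K) ℝ) (phat : Fin N → ℝ)
    (hV : ∀ i j, 0 ≤ V i j) (hVdiag : ∀ i, V i i = 0)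
    (hz : ∀ k, 0 < z k) (hγ : ∀ k, 0 < γ k)
    (hC : ∀ n k, C n k = 0 ∨ C n k = 1) (hCcol : ∀ k, ∃ n, C n k = 1)
    (hphat : ∀ n, 0 < phat n)
    (hirr : MatIrred V)
    (n₀ : Fin N) (hn₀ : ∀ n, specRad (Bmat V z γ C phat n) ≤ specRad (Bmat V z γ C phat n₀))
    (p : Fin K → ℝ) (hp : ∀ k, 0 < p k)
    (heig : (Bmat V z γ C phat n₀) *ᵥ p = specRad (Bmat V z γ C phat n₀) • p)
    (hnorm : C.mulVec p n₀ = phat n₀) :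
    MaxMinBalanced V z γ C phat p :=
  stmt10_general V z γ C phat hV hz hγ hC hphat n₀ hn₀ p hp heig hnorm
end
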